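/- arXiv:1901.08770 — 9 statements merged into one kernel-verified Lean document; each statement's English description precedes it below -/
import Mathlib

section
/- Let T* be a tree on a finite vertex set V with at least 2 vertices, let Σ* be a positive definite real matrix indexed by V whose conditional independence structure is given by T*, write Ω* = (Σ*)⁻¹, let a be a leaf of T* with unique neighbor b, and let c > 0. Define Σ^q = Σ* − (1/Ω*_{aa})·E_{aa} + c·E_{bb}. Then Σ^q is positive definite and its conditional independence structure is given by the tree obtained from T* by exchanging the positions of a and b; that is, for all i ≠ j, the (i,j) entry of (Σ^q)⁻¹ is nonzero if and only if τ(i) and τ(j) are adjacent in T*, where τ is the transposition of a and b. -/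
open Matrix

/-- `S` has conditional independence structure given by the simple graph `G`. -/
def CondIndepStruct {V : Type*} [Fintype V] [DecidableEq V]
    (S : Matrix V V ℝ) (G : SimpleGraph V) : Prop :=
  ∀ i j : V, i ≠ j → (S⁻¹ i j ≠ 0 ↔ G.Adj i j)

/-- A leaf of a graph: a vertex with exactly one neighbor. -/
def IsLeaf {V : Type*} (G : SimpleGraph V) (a : V) : Prop :=
  ∃! b : V, G.Adj a b

section Aux

variable {V : Type*} [Fintype V] [DecidableEq V]

private lemma mul_vmv (A : Matrix V V ℝ) (u v : V → ℝ) :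
    A * vecMulVec u v = vecMulVec (A *ᵥ u) v := by
  ext i j
  simp only [Matrix.mul_apply, vecMulVec_apply, mulVec, dotProduct, Finset.sum_mul]
  exact Finset.sum_congr rfl fun k _ => by ring

private lemma vmv_mul (A : Matrix V V ℝ) (u v : V → ℝ) :
    vecMulVec u v * A = vecMulVec u (v ᵥ* A) := by
  ext i j
  simp only [Matrix.mul_apply, vecMulVec_apply, vecMul, dotProduct, Finset.mul_sum]
  exact Finset.sum_congr rfl fun k _ => by ring

private lemma vmv_mul_vmv (u v w z : V → ℝ) :
    vecMulVec u v * vecMulVec w z = (v ⬝ᵥ w) • vecMulVec u z := by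
  ext i j
  simp only [Matrix.mul_apply, vecMulVec_apply, Matrix.smul_apply, dotProduct, smul_eq_mul,
    Finset.sum_mul]
  exact Finset.sum_congr rfl fun k _ => by ring

private lemma sbm_eq (a : V) (x : ℝ) :
    single a a x = x • vecMulVec (Pi.single a (1 : ℝ)) (Pi.single a 1) := by
  ext i j
  simp only [single, of_apply, Matrix.smul_apply, vecMulVec_apply, Pi.single_apply,
    smul_eq_mul]
  by_cases h : i = a <;> by_cases h2 : j = a
  · subst h; subst h2; simp
  · subst h; simp [h2, Ne.symm h2]
  · subst h2; simp [h, Ne.symm h]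
  · simp [h, h2, Ne.symm h, Ne.symm h2]

private lemma vmv_mulVec (u v x : V → ℝ) :
    vecMulVec u v *ᵥ x = (v ⬝ᵥ x) • u := by
  ext i
  simp only [mulVec, dotProduct, vecMulVec_apply, Pi.smul_apply, smul_eq_mul, Finset.sum_mul]
  exact Finset.sum_congr rfl fun k _ => by ring

end Aux

set_option maxHeartbeats 1000000 in
theorem stmt_8 {V : Type*} [Fintype V] [DecidableEq V]
    (Tstar : SimpleGraph V) (hTree : Tstar.IsTree) (hcard : 2 ≤ Fintype.card V)
    (Sig : Matrix V V ℝ) (hPD : Sig.PosDef) (hCI : CondIndepStruct Sig Tstar)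
    (a b : V) (hleaf : IsLeaf Tstar a) (hadj : Tstar.Adj a b)
    (c : ℝ) (hc : 0 < c)
    (Sq : Matrix V V ℝ)
    (hSq : Sq = Sig - single a a (1 / Sig⁻¹ a a) + single b b c) :
    Sq.PosDef ∧
      ∀ i j : V, i ≠ j →
        (Sq⁻¹ i j ≠ 0 ↔ Tstar.Adj (Equiv.swap a b i) (Equiv.swap a b j)) := by
  classical
  have hab : a ≠ b := hadj.ne
  set B := Sig⁻¹ with hB
  have hdet : IsUnit Sig.det := hPD.det_pos.ne'.isUnit
  have hSB : Sig * B = 1 := Sig.mul_nonsing_inv hdet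
  have hBS : B * Sig = 1 := Sig.nonsing_inv_mul hdet
  have hBPD : B.PosDef := hPD.inv
  have hsymS : ∀ i j, Sig i j = Sig j i := by
    intro i j
    conv_lhs => rw [← hPD.isHermitian]
    simp [conjTranspose_apply]
  have hsymB : ∀ i j, B i j = B j i := by
    intro i j
    conv_lhs => rw [← hBPD.isHermitian]
    simp [conjTranspose_apply]
  set p := B a a with hpdef
  set q := B a b with hqdef
  set r := B b b with hrdef
  have hp : 0 < p := by
    have hne : (Pi.single a (1 : ℝ) : V → ℝ) ≠ 0 := by
      intro h
      simpa using congrFun h a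
    have := hBPD.dotProduct_mulVec_pos hne
    simpa [mulVec_single, single_dotProduct] using this
  have hq : q ≠ 0 := (hCI a b hab).mpr hadj
  have hBa0 : ∀ j, j ≠ a → j ≠ b → B a j = 0 := by
    intro j hja hjb
    by_contra h
    have hadj' := (hCI a j (Ne.symm hja)).mp h
    obtain ⟨b', hb', hu⟩ := hleaf
    exact hjb ((hu j hadj').trans (hu b hadj).symm)
  have hBa0' : ∀ j, j ≠ a → j ≠ b → B j a = 0 := fun j h1 h2 => by
    rw [hsymB j a]; exact hBa0 j h1 h2
  set ea : V → ℝ := Pi.single a 1 with hea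
  set eb : V → ℝ := Pi.single b 1 with heb
  set wa : V → ℝ := B *ᵥ ea with hwadef
  set wb : V → ℝ := B *ᵥ eb with hwbdef
  have hwaApp : ∀ i, wa i = B i a := fun i => by
    rw [hwadef, hea, mulVec_single_one]; rfl
  have hwbApp : ∀ i, wb i = B i b := fun i => by
    rw [hwbdef, heb, mulVec_single_one]; rfl
  have hwa : wa = p • ea + q • eb := by
    funext j
    rcases eq_or_ne j a with hEq | hja
    · subst hEq; simp [hwaApp, hea, heb, Pi.single_apply, hab, Ne.symm hab, hpdef]
    rcases eq_or_ne j b with hEq | hjb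
    · replace hEq := hEq.symm
      subst hEq
      simp [hwaApp, hea, heb, Pi.single_apply, hab, Ne.symm hab, hsymB b a, hqdef]
    · simp [hwaApp, hea, heb, Pi.single_apply, hja, hjb, hBa0' j hja hjb]
  set sa : V → ℝ := Sig *ᵥ ea with hsadef
  set sb : V → ℝ := Sig *ᵥ eb with hsbdef
  have hkey : p • sa + q • sb = ea := by
    have h1 : Sig *ᵥ (B *ᵥ ea) = ea := by
      rw [mulVec_mulVec, hSB, one_mulVec]
    rw [← hwadef, hwa] at h1
    rw [← h1]
    simp [mulVec_add, mulVec_smul, hsadef, hsbdef]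
  set t : ℝ := -(q / p) with ht
  have htne : t ≠ 0 := by
    rw [ht]
    exact neg_ne_zero.mpr (div_ne_zero hq hp.ne')
  have hsa : sa = p⁻¹ • ea + t • sb := by
    funext j
    have h1 := congrFun hkey j
    simp only [Pi.add_apply, Pi.smul_apply, smul_eq_mul, ht] at h1 ⊢
    field_simp [hp.ne']
    linarith [h1]
  have hsab : sa b = t * sb b := by
    have h1 := congrFun hsa b
    simpa [hea, Pi.single_apply, Ne.symm hab] using h1
  have hsba : sb a = t * sb b := by
    have h1 : sb a = sa b := by
      rw [hsadef, hsbdef, hea, heb, mulVec_single, mulVec_single]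
      simpa using hsymS a b
    rw [h1, hsab]
  have hsaa : sa a = p⁻¹ + t * (t * sb b) := by
    have h1 := congrFun hsa a
    simp only [Pi.add_apply, Pi.smul_apply, smul_eq_mul, hea, Pi.single_eq_same, mul_one] at h1
    rw [h1, hsba]
  have hrowa : ∀ z : V → ℝ, (Sig *ᵥ z) a = sa ⬝ᵥ z := by
    intro z
    simp only [mulVec, dotProduct, hsadef, hea, mulVec_single_one, col_apply]
    exact Finset.sum_congr rfl fun k _ => by rw [hsymS a k]
  have hrowb : ∀ z : V → ℝ, (Sig *ᵥ z) b = sb ⬝ᵥ z := by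
    intro z
    simp only [mulVec, dotProduct, hsbdef, heb, mulVec_single_one, col_apply]
    exact Finset.sum_congr rfl fun k _ => by rw [hsymS b k]
  have hsax : ∀ z : V → ℝ, sa ⬝ᵥ z = p⁻¹ * z a + t * (sb ⬝ᵥ z) := by
    intro z
    rw [hsa]
    simp [add_dotProduct, smul_dotProduct, hea, single_dotProduct]
  have hSq2 : Sq = Sig + (-(p⁻¹)) • vecMulVec ea ea + c • vecMulVec eb eb := by
    rw [hSq, sbm_eq, sbm_eq, one_div, sub_eq_add_neg, ← neg_smul, ← hea, ← heb]
  -- quadratic form identity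
  have hQuad : ∀ x : V → ℝ,
      x ⬝ᵥ (Sq *ᵥ x) =
        (x + (t * x a) • eb - x a • ea) ⬝ᵥ (Sig *ᵥ (x + (t * x a) • eb - x a • ea))
          + c * x b ^ 2 := by
    intro x
    have hL : x ⬝ᵥ (Sq *ᵥ x) = x ⬝ᵥ (Sig *ᵥ x) + (-(p⁻¹)) * (x a) ^ 2 + c * (x b) ^ 2 := by
      rw [hSq2]
      simp only [Matrix.add_mulVec, Matrix.smul_mulVec, vmv_mulVec, dotProduct_add,
        dotProduct_smul, smul_eq_mul, hea, heb, single_dotProduct, dotProduct_single,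
        smul_dotProduct]
      ring
    rw [hL]
    have hmv : Sig *ᵥ (x + (t * x a) • eb - x a • ea) =
        Sig *ᵥ x + (t * x a) • sb - x a • sa := by
      simp [Matrix.mulVec_add, Matrix.mulVec_sub, Matrix.mulVec_smul, hsadef, hsbdef]
    rw [hmv]
    simp only [add_dotProduct, sub_dotProduct, smul_dotProduct, dotProduct_add, dotProduct_sub,
      dotProduct_smul, smul_eq_mul, hea, heb, single_dotProduct]
    rw [hrowa, hrowb]
    have hcomm1 : x ⬝ᵥ sb = sb ⬝ᵥ x := dotProduct_comm _ _
    have hcomm2 : x ⬝ᵥ sa = sa ⬝ᵥ x := dotProduct_comm _ _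
    rw [hcomm1, hcomm2, hsax x, hsaa, hsab, hsba]
    ring
  have hHerm : Sq.IsHermitian := by
    rw [hSq2]
    ext i j
    simp only [conjTranspose_apply, Matrix.add_apply, Matrix.smul_apply, vecMulVec_apply,
      smul_eq_mul, star_trivial]
    rw [hsymS j i]; ring
  have hPosDef : Sq.PosDef := by
    refine Matrix.PosDef.of_dotProduct_mulVec_pos hHerm fun x hx => ?_
    have hstar : (star x : V → ℝ) = x := by
      funext i; simp
    rw [hstar, hQuad x]
    set y : V → ℝ := x + (t * x a) • eb - x a • ea with hy
    by_cases hy0 : y = 0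
    · have hyb : x b + t * x a = 0 := by
        have h := congrFun hy0 b
        simp only [hy, Pi.add_apply, Pi.sub_apply, Pi.smul_apply, smul_eq_mul, hea, heb,
          Pi.single_apply, Pi.zero_apply] at h
        simp only [if_true, if_neg (Ne.symm hab), mul_one, mul_zero, sub_zero] at h
        linarith [h]
      rcases eq_or_ne (x b) 0 with hxb | hxb
      · exfalso
        apply hx
        have hxa : x a = 0 := by
          have h2 : t * x a = 0 := by rw [hxb, zero_add] at hyb; exact hyb
          exact (mul_eq_zero.mp h2).resolve_left htne
        funext j
        rcases eq_or_ne j a with rfl | hja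
        · exact hxa
        rcases eq_or_ne j b with rfl | hjb
        · exact hxb
        · have hyj := congrFun hy0 j
          simpa [hy, hea, heb, Pi.single_apply, hja, hjb] using hyj
      · rw [hy0]
        simp only [zero_dotProduct]
        have : 0 < c * x b ^ 2 := by positivity
        linarith
    · have h1 := hBPD  -- unused
      have h2 : 0 < y ⬝ᵥ (Sig *ᵥ y) := by
        have := hPD.dotProduct_mulVec_pos hy0
        have hstar2 : (star y : V → ℝ) = y := by funext i; simp
        rwa [hstar2] at this
      have h3 : 0 ≤ c * x b ^ 2 := by positivity
      linarith
  -- explicit inverse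
  set K1 : ℝ := (1 / c + r) / q ^ 2 with hK1
  set K2 : ℝ := 1 / q with hK2
  set W : Matrix V V ℝ :=
    B + K1 • vecMulVec wa wa - K2 • (vecMulVec wa wb + vecMulVec wb wa) with hWdef
  have hSwa : Sig *ᵥ wa = ea := by
    rw [hwadef, mulVec_mulVec, hSB, one_mulVec]
  have hSwb : Sig *ᵥ wb = eb := by
    rw [hwbdef, mulVec_mulVec, hSB, one_mulVec]
  have hBsymM : Bᵀ = B := by
    ext i j; rw [transpose_apply, hsymB j i]
  have hrowB : ∀ v : V → ℝ, v ᵥ* B = B *ᵥ v := by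
    intro v; rw [← hBsymM, vecMul_transpose, hBsymM]
  have hd1 : ea ⬝ᵥ wa = p := by
    simp [hea, single_dotProduct, hwaApp, hpdef]
  have hd2 : ea ⬝ᵥ wb = q := by
    simp [hea, single_dotProduct, hwbApp, hqdef]
  have hd3 : eb ⬝ᵥ wa = q := by
    simp [heb, single_dotProduct, hwaApp, hsymB b a, hqdef]
  have hd4 : eb ⬝ᵥ wb = r := by
    simp [heb, single_dotProduct, hwbApp, hrdef]
  have P2 : Sig * vecMulVec wa wa = vecMulVec ea wa := by rw [mul_vmv, hSwa]
  have P3 : Sig * vecMulVec wa wb = vecMulVec ea wb := by rw [mul_vmv, hSwa]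
  have P4 : Sig * vecMulVec wb wa = vecMulVec eb wa := by rw [mul_vmv, hSwb]
  have P5 : vecMulVec ea ea * B = vecMulVec ea wa := by
    rw [vmv_mul, hrowB]
  have P6 : vecMulVec eb eb * B = vecMulVec eb wb := by
    rw [vmv_mul, hrowB]
  have P7 : vecMulVec ea ea * vecMulVec wa wa = p • vecMulVec ea wa := by
    rw [vmv_mul_vmv, hd1]
  have P8 : vecMulVec ea ea * vecMulVec wa wb = p • vecMulVec ea wb := by
    rw [vmv_mul_vmv, hd1]
  have P9 : vecMulVec ea ea * vecMulVec wb wa = q • vecMulVec ea wa := by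
    rw [vmv_mul_vmv, hd2]
  have P10 : vecMulVec eb eb * vecMulVec wa wa = q • vecMulVec eb wa := by
    rw [vmv_mul_vmv, hd3]
  have P11 : vecMulVec eb eb * vecMulVec wa wb = q • vecMulVec eb wb := by
    rw [vmv_mul_vmv, hd3]
  have P12 : vecMulVec eb eb * vecMulVec wb wa = r • vecMulVec eb wa := by
    rw [vmv_mul_vmv, hd4]
  have hmain : Sq * W = 1 := by
    rw [hSq2, hWdef]
    simp only [mul_add, add_mul, mul_sub, Matrix.smul_mul, Matrix.mul_smul, smul_add, smul_sub,
      hSB, P2, P3, P4, P5, P6, P7, P8, P9, P10, P11, P12]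
    have hqi : q * q⁻¹ = 1 := mul_inv_cancel₀ hq
    have hpi : p * p⁻¹ = 1 := mul_inv_cancel₀ hp.ne'
    have hci : c * c⁻¹ = 1 := mul_inv_cancel₀ hc.ne'
    match_scalars
    all_goals try ring
    all_goals try linear_combination (-c) * hqi
    all_goals try linear_combination q⁻¹ * hpi
    all_goals try linear_combination (q⁻¹ * (1 + c * r)) * hqi + (q * q⁻¹ ^ 2) * hci
    all_goals try linear_combination (-(c⁻¹ * q⁻¹ ^ 2 + r * q⁻¹ ^ 2)) * hpi + p⁻¹ * hqi

  have hWinv : Sq⁻¹ = W := inv_eq_right_inv hmain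
  have hWapp : ∀ i j, W i j =
      B i j + K1 * (B i a * B j a) - K2 * (B i a * B j b + B i b * B j a) := by
    intro i j
    simp only [hWdef, Matrix.add_apply, Matrix.sub_apply, Matrix.smul_apply, vecMulVec_apply,
      smul_eq_mul, hwaApp, hwbApp]
  refine ⟨hPosDef, ?_⟩
  intro i j hij
  rw [hWinv]
  rcases eq_or_ne i a with hEq | hia
  · -- i = a
    replace hEq := hEq.symm
    subst hEq
    rcases eq_or_ne j b with hEq2 | hjb
    · -- (a, b)
      replace hEq2 := hEq2.symm
      subst hEq2
      have hval : W a b = p / (c * q) := by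
        rw [hWapp, hsymB b a, ← hpdef, ← hqdef, ← hrdef, hK1, hK2]
        field_simp [hq, hp.ne', hc.ne']
        try ring
      rw [hval, Equiv.swap_apply_left, Equiv.swap_apply_right]
      constructor
      · intro _; exact hadj.symm
      · intro _; exact div_ne_zero hp.ne' (mul_ne_zero hc.ne' hq)
    · -- (a, j), j ∉ {a, b}
      have hja : j ≠ a := Ne.symm hij
      have hval : W a j = -(p / q) * B b j := by
        rw [hWapp, hBa0 j hja hjb, hBa0' j hja hjb, hsymB j b, ← hpdef, hK2]
        field_simp [hq, hp.ne', hc.ne']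
        try ring
      rw [hval, Equiv.swap_apply_left, Equiv.swap_apply_of_ne_of_ne hja hjb]
      have hco : -(p / q) ≠ 0 := neg_ne_zero.mpr (div_ne_zero hp.ne' hq)
      rw [mul_ne_zero_iff]
      have hbj : b ≠ j := Ne.symm hjb
      rw [← hCI b j hbj]
      exact ⟨fun h => h.2, fun h => ⟨hco, h⟩⟩
  rcases eq_or_ne i b with hEq | hib
  · -- i = b
    replace hEq := hEq.symm
    subst hEq
    rcases eq_or_ne j a with hEq2 | hja
    · -- (b, a)
      replace hEq2 := hEq2.symm
      subst hEq2
      have hval : W b a = p / (c * q) := by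
        rw [hWapp, hsymB b a, ← hpdef, ← hqdef, ← hrdef, hK1, hK2]
        field_simp [hq, hp.ne', hc.ne']
        try ring
      rw [hval, Equiv.swap_apply_left, Equiv.swap_apply_right]
      constructor
      · intro _; exact hadj
      · intro _; exact div_ne_zero hp.ne' (mul_ne_zero hc.ne' hq)
    · -- (b, j), j ∉ {a, b}
      have hjb : j ≠ b := Ne.symm hij
      have hval : W b j = 0 := by
        rw [hWapp, hBa0' j hja hjb, hsymB b a, hsymB j b, ← hqdef, hK2]
        field_simp [hq, hp.ne', hc.ne']
        ring
      rw [hval, Equiv.swap_apply_right, Equiv.swap_apply_of_ne_of_ne hja hjb]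
      constructor
      · intro h; exact absurd rfl h
      · intro h
        exfalso
        obtain ⟨b', hb', hu⟩ := hleaf
        exact hjb ((hu j h).trans (hu b hadj).symm)
  · -- i ∉ {a, b}
    rcases eq_or_ne j a with hEq2 | hja
    · -- (i, a)
      replace hEq2 := hEq2.symm
      subst hEq2
      have hval : W i a = -(p / q) * B b i := by
        rw [hWapp, hBa0' i hia hib, hsymB i b, ← hpdef, ← hqdef, hK2]
        field_simp [hq, hp.ne', hc.ne']
        try ring
      rw [hval, Equiv.swap_apply_left, Equiv.swap_apply_of_ne_of_ne hia hib]
      have hco : -(p / q) ≠ 0 := neg_ne_zero.mpr (div_ne_zero hp.ne' hq)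
      rw [mul_ne_zero_iff, Tstar.adj_comm, ← hCI b i (Ne.symm hib)]
      exact ⟨fun h => h.2, fun h => ⟨hco, h⟩⟩
    rcases eq_or_ne j b with hEq2 | hjb
    · -- (i, b)
      replace hEq2 := hEq2.symm
      subst hEq2
      have hval : W i b = 0 := by
        rw [hWapp, hBa0' i hia hib, hsymB b a, hsymB i b, ← hqdef, hK2]
        field_simp [hq, hp.ne', hc.ne']
        ring
      rw [hval, Equiv.swap_apply_right, Equiv.swap_apply_of_ne_of_ne hia hib]
      constructor
      · intro h; exact absurd rfl h
      · intro h
        exfalso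
        obtain ⟨b', hb', hu⟩ := hleaf
        exact hib ((hu i h.symm).trans (hu b hadj).symm)
    · -- (i, j) ∉ {a, b}
      have hval : W i j = B i j := by
        rw [hWapp, hBa0' i hia hib, hBa0' j hja hjb]
        ring
      rw [hval, Equiv.swap_apply_of_ne_of_ne hia hib, Equiv.swap_apply_of_ne_of_ne hja hjb]
      exact hCI i j hij
end

section
/- Let Σ be an n×n positive definite real matrix with n ≥ 2, let a ≠ b be indices, and suppose there exists α ≠ 0 such that Σ_{ib} = α·Σ_{ia} for every index i ≠ b. Then Ω = Σ⁻¹ satisfies Ω_{bi} = 0 for all i ∉ {a, b} and Ω_{ba} ≠ 0. -/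
open Matrix

theorem stmt_9 {n : ℕ} (hn : 2 ≤ n)
    (Sig : Matrix (Fin n) (Fin n) ℝ) (hPD : Sig.PosDef)
    (a b : Fin n) (hab : a ≠ b)
    (α : ℝ) (hα : α ≠ 0)
    (hcol : ∀ i : Fin n, i ≠ b → Sig i b = α * Sig i a) :
    (∀ i : Fin n, i ≠ a → i ≠ b → Sig⁻¹ b i = 0) ∧ Sig⁻¹ b a ≠ 0 := by
  have hdet : IsUnit Sig.det := isUnit_iff_ne_zero.mpr hPD.det_pos.ne'
  have hinv : Sig⁻¹ * Sig = 1 := Matrix.nonsing_inv_mul Sig hdet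
  set Ω := Sig⁻¹ with hΩ
  set β := Sig b b - α * Sig b a with hβ
  have hdecomp : ∀ j, Sig j b = α * Sig j a + (if j = b then β else 0) := by
    intro j
    by_cases h : j = b
    · subst h; simp [hβ]
    · simp [h, hcol j h]
  have key : ∀ i, Ω i b * β =
      (if i = b then (1:ℝ) else 0) - α * (if i = a then (1:ℝ) else 0) := by
    intro i
    have h1 : (Ω * Sig) i b = (1 : Matrix (Fin n) (Fin n) ℝ) i b := by rw [hinv]
    have h2 : (Ω * Sig) i a = (1 : Matrix (Fin n) (Fin n) ℝ) i a := by rw [hinv]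
    rw [Matrix.mul_apply] at h1 h2
    have hsplit : ∑ j, Ω i j * Sig j b =
        α * ∑ j, Ω i j * Sig j a + Ω i b * β := by
      have : ∀ j : Fin n, Ω i j * Sig j b =
          α * (Ω i j * Sig j a) + Ω i j * (if j = b then β else 0) := by
        intro j; rw [hdecomp j]; ring
      rw [Finset.sum_congr rfl (fun j _ => this j), Finset.sum_add_distrib,
        ← Finset.mul_sum]
      congr 1
      simp only [mul_ite, mul_zero]
      simp
    rw [hsplit, h2] at h1
    simp only [Matrix.one_apply] at h1
    linarith [h1]
  have hsymΩ : ∀ i j, Ω i j = Ω j i := by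
    intro i j
    have h := (hPD.isHermitian.inv).apply i j
    simpa using h.symm
  have hβne : β ≠ 0 := by
    intro h0
    have := key b
    rw [h0, mul_zero] at this
    simp [hab.symm, Ne.symm hab] at this
  constructor
  · intro i hia hib
    have := key i
    simp [hia, hib] at this
    rcases this with h | h
    · rw [hsymΩ b i]; exact h
    · exact absurd h hβne
  · have := key a
    simp [hab, Ne.symm hab] at this
    intro h0
    rw [hsymΩ a b, h0, zero_mul] at this
    exact hα (by linarith)
end

section
/- Let Σ be an n×n positive definite real matrix with n ≥ 2 and Ω = Σ⁻¹, and let a ≠ b be indices such that a is a leaf attached to b in Ω. Set Σ^I = Σ − (1/Ω_{aa})·E_{aa}. Then there exists a real number c₃ such that the a-th column of Σ^I equals c₃ times its b-th column (i.e., Σ^I_{ia} = c₃·Σ^I_{ib} for every index i, including i = a); moreover Σ^I is positive semidefinite and has rank exactly n − 1. -/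
open Matrix

/-- In the precision matrix `Om`, node `a` is a leaf attached to node `b`. -/
def IsLeafAttached {n : ℕ} (Om : Matrix (Fin n) (Fin n) ℝ) (a b : Fin n) : Prop :=
  (∀ i : Fin n, i ≠ a → i ≠ b → Om i a = 0) ∧ Om a b ≠ 0

lemma stdBasis_mulVec' {n : ℕ} (a : Fin n) (c : ℝ) (x : Fin n → ℝ) :
    Matrix.single a a c *ᵥ x = Pi.single a (c * x a) := by
  ext i
  by_cases h : i = a
  · subst h; simp [mulVec, dotProduct, Matrix.single, Pi.single_apply, ite_and]
  · simp [mulVec, dotProduct, Matrix.single, Pi.single_apply, ite_and, h, Ne.symm h]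

theorem stmt_11 {n : ℕ} (hn : 2 ≤ n)
    (Sig : Matrix (Fin n) (Fin n) ℝ) (hPD : Sig.PosDef)
    (a b : Fin n) (hab : a ≠ b) (hleaf : IsLeafAttached Sig⁻¹ a b)
    (SigI : Matrix (Fin n) (Fin n) ℝ)
    (hSigI : SigI = Sig - Matrix.single a a (1 / Sig⁻¹ a a)) :
    (∃ c₃ : ℝ, ∀ i : Fin n, SigI i a = c₃ * SigI i b) ∧
      SigI.PosSemidef ∧ SigI.rank = n - 1 := by
  have hdet : IsUnit Sig.det := isUnit_iff_ne_zero.2 hPD.det_pos.ne'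
  set Om := Sig⁻¹ with hOm
  have hOmPD : Om.PosDef := hPD.inv
  have hSO : Sig * Om = 1 := mul_nonsing_inv _ hdet
  have hOS : Om * Sig = 1 := nonsing_inv_mul _ hdet
  have hOmaa : 0 < Om a a := by
    have h := hOmPD.dotProduct_mulVec_pos (x := Pi.single a 1) (by
      intro h
      have := congrFun h a
      simp at this)
    simpa [mulVec_single, single_dotProduct] using h
  have hsymm : Sigᵀ = Sig := by
    ext i j
    rw [transpose_apply]
    simpa using hPD.1.apply i j
  -- column identity
  have hcol : ∀ i, Sig i a * Om a a + Sig i b * Om b a =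
      (1 : Matrix (Fin n) (Fin n) ℝ) i a := by
    intro i
    have h1 : (Sig * Om) i a = (1 : Matrix (Fin n) (Fin n) ℝ) i a := by rw [hSO]
    rw [mul_apply] at h1
    rw [← h1, ← Finset.sum_subset (Finset.subset_univ ({a, b} : Finset (Fin n)))
      (fun x _ hx => by
        simp only [Finset.mem_insert, Finset.mem_singleton, not_or] at hx
        rw [hleaf.1 x hx.1 hx.2, mul_zero])]
    rw [Finset.sum_pair hab]
  -- the kernel vector
  set u : Fin n → ℝ := Om *ᵥ Pi.single a 1 with hu
  have hu_a : u a = Om a a := by simp [hu, mulVec_single]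
  have hSu : Sig *ᵥ u = Pi.single a 1 := by
    rw [hu, mulVec_mulVec, hSO, one_mulVec]
  have hvm : u ᵥ* Sig = Sig *ᵥ u := by
    conv_lhs => rw [← hsymm]
    rw [vecMul_transpose]
  have hSigIu : SigI *ᵥ u = 0 := by
    rw [hSigI, sub_mulVec, hSu, stdBasis_mulVec', hu_a, one_div,
      inv_mul_cancel₀ hOmaa.ne', sub_self]
  -- quadratic form identity
  have hquad : ∀ x : Fin n → ℝ,
      x ⬝ᵥ (SigI *ᵥ x) = (x - (x a / Om a a) • u) ⬝ᵥ (Sig *ᵥ (x - (x a / Om a a) • u)) := by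
    intro x
    have h1 : x ⬝ᵥ (Sig *ᵥ u) = x a := by rw [hSu, dotProduct_single, mul_one]
    have h2 : u ⬝ᵥ (Sig *ᵥ x) = x a := by
      rw [dotProduct_mulVec, hvm, hSu, single_dotProduct, one_mul]
    have h3 : u ⬝ᵥ (Sig *ᵥ u) = Om a a := by rw [hSu, dotProduct_single, mul_one, hu_a]
    rw [hSigI, sub_mulVec, stdBasis_mulVec', dotProduct_sub, dotProduct_single]
    rw [mulVec_sub, mulVec_smul, dotProduct_sub, sub_dotProduct, sub_dotProduct,
      dotProduct_smul, smul_dotProduct, smul_dotProduct, dotProduct_smul,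
      h1, h2, h3]
    simp only [smul_eq_mul]
    field_simp
    ring
  refine ⟨⟨-(Om b a / Om a a), fun i => ?_⟩, posSemidef_iff_dotProduct_mulVec.mpr ⟨?_, ?_⟩, ?_⟩
  · have h := hcol i
    rw [one_apply] at h
    rw [hSigI]
    by_cases hia : i = a
    · subst hia
      rw [if_pos rfl] at h
      simp [Matrix.single, hab]
      field_simp
      linear_combination h
    · have hai : ¬ a = i := fun hh => hia hh.symm
      rw [if_neg hia] at h
      simp [Matrix.single, hai]
      field_simp
      linear_combination h
  · -- Hermitian
    rw [hSigI]
    have h1 : (Sig - Matrix.single a a (1 / Om a a))ᴴ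
        = Sigᴴ - (Matrix.single a a (1 / Om a a))ᴴ := conjTranspose_sub _ _
    rw [Matrix.IsHermitian, h1, hPD.1]
    congr 1
    ext i j
    simp [conjTranspose_apply, Matrix.single, and_comm]
  · -- nonnegativity
    intro x
    have hx := hPD.posSemidef.dotProduct_mulVec_nonneg (x - (x a / Om a a) • u)
    simp only [star_trivial] at hx ⊢
    rw [hquad x]
    exact hx
  · -- rank
    have hu0 : u ≠ 0 := by
      intro h
      rw [h] at hu_a
      exact hOmaa.ne' hu_a.symm
    have hker : LinearMap.ker SigI.mulVecLin = Submodule.span ℝ {u} := by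
      ext x
      simp only [LinearMap.mem_ker, mulVecLin_apply, Submodule.mem_span_singleton]
      constructor
      · intro hx
        refine ⟨1 / Om a a * x a, ?_⟩
        have h1 : Sig *ᵥ x = Pi.single a (1 / Om a a * x a) := by
          have h2 : Sig *ᵥ x - Matrix.single a a (1 / Om a a) *ᵥ x = 0 := by
            rw [← sub_mulVec, ← hSigI, hx]
          rw [sub_eq_zero] at h2
          rw [h2, stdBasis_mulVec']
        have h3 : x = Om *ᵥ (Sig *ᵥ x) := by
          rw [mulVec_mulVec, hOS, one_mulVec]
        have h4 : (Pi.single a (1 / Om a a * x a) : Fin n → ℝ)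
            = (1 / Om a a * x a) • (Pi.single a 1 : Fin n → ℝ) := by
          ext i
          by_cases hia : i = a <;> simp [hia, Pi.single_apply]
        rw [h1, h4, mulVec_smul] at h3
        exact h3.symm
      · rintro ⟨c, rfl⟩
        rw [mulVec_smul, hSigIu, smul_zero]
    have hrank : SigI.rank + 1 = n := by
      have h := LinearMap.finrank_range_add_finrank_ker SigI.mulVecLin
      rw [hker, finrank_span_singleton hu0, Module.finrank_fin_fun] at h
      exact h
    omega
end

section
/- Let Σ be an n×n symmetric positive definite real matrix with Ω = Σ⁻¹, let a ≠ b be indices with Ω_{ab} ≠ 0, let c > 0, and set Σ' = Σ − (1/Ω_{aa})·E_{aa} + c·E_{bb}. Then Σ' is invertible and (Σ')⁻¹ = Ω + ((1 + c·Ω_{bb})/(c·Ω_{ab}²))·(Ω_{:,a}Ω_{a,:}) − (1/Ω_{ab})·(Ω_{:,b}Ω_{a,:} + Ω_{:,a}Ω_{b,:}), where Ω_{:,i}Ω_{j,:} denotes the outer-product matrix whose (p,q) entry is Ω_{pi}·Ω_{jq}. -/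
set_option maxHeartbeats 1000000

open Matrix Finset

theorem stmt_12 {n : ℕ}
    (Sig : Matrix (Fin n) (Fin n) ℝ) (hPD : Sig.PosDef)
    (Om : Matrix (Fin n) (Fin n) ℝ) (hOm : Om = Sig⁻¹)
    (a b : Fin n) (hab : a ≠ b) (hOmab : Om a b ≠ 0)
    (c : ℝ) (hc : 0 < c)
    (Sig' : Matrix (Fin n) (Fin n) ℝ)
    (hSig' : Sig' = Sig - single a a (1 / Om a a) + single b b c) :
    IsUnit Sig'.det ∧
      Sig'⁻¹ = Om +
        ((1 + c * Om b b) / (c * (Om a b) ^ 2)) •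
          vecMulVec (fun p => Om p a) (fun q => Om a q) -
        (Om a b)⁻¹ •
          (vecMulVec (fun p => Om p b) (fun q => Om a q) +
            vecMulVec (fun p => Om p a) (fun q => Om b q)) := by
  have hdet : IsUnit Sig.det := isUnit_iff_ne_zero.mpr (ne_of_gt hPD.det_pos)
  have hmul : Sig * Om = 1 := by rw [hOm]; exact mul_nonsing_inv _ hdet
  have hOmPD : Om.PosDef := by rw [hOm]; exact hPD.inv
  have hOmaa : 0 < Om a a := by
    have h := hOmPD.dotProduct_mulVec_pos (x := Pi.single a 1) (by simp [Pi.single_eq_same, Function.ne_iff])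
    simpa [dotProduct, mulVec, Pi.single_apply, Finset.sum_ite_eq'] using h
  have hsymm : Om b a = Om a b := by
    have hst : Sigᵀ = Sig := by simpa using hPD.1.eq
    have hs : Omᵀ = Om := by
      rw [hOm, transpose_nonsing_inv, hst]
    have := congrFun (congrFun hs a) b
    simpa [transpose_apply] using this
  set α := (1 + c * Om b b) / (c * (Om a b) ^ 2) with hα
  set β := (Om a b)⁻¹ with hβ
  set M : Matrix (Fin n) (Fin n) ℝ := Om +
        α • vecMulVec (fun p => Om p a) (fun q => Om a q) -
        β • (vecMulVec (fun p => Om p b) (fun q => Om a q) +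
            vecMulVec (fun p => Om p a) (fun q => Om b q)) with hM
  have e1 : ∀ p q, ∑ k, Sig p k * Om k q = if p = q then 1 else 0 := by
    intro p q
    have := congrFun (congrFun hmul p) q
    simpa [Matrix.mul_apply, Matrix.one_apply] using this
  have hMapp : ∀ k q, M k q = Om k q + α * (Om k a * Om a q) - β * (Om k b * Om a q + Om k a * Om b q) := by
    intro k q
    simp [hM, vecMulVec_apply, mul_add]
  have hOmaa' : Om a a ≠ 0 := ne_of_gt hOmaa
  have hc' : c ≠ 0 := ne_of_gt hc
  have key : Sig' * M = 1 := by
    ext i j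
    rw [Matrix.mul_apply]
    have hterm : ∀ k, Sig' i k * M k j =
        (Sig i k * Om k j) + (α * Om a j) * (Sig i k * Om k a)
          - (β * Om a j) * (Sig i k * Om k b) - (β * Om b j) * (Sig i k * Om k a)
          - (if k = a then (if i = a then (1 / Om a a) * M a j else 0) else 0)
          + (if k = b then (if i = b then c * M b j else 0) else 0) := by
      intro k
      rw [hSig']
      simp only [Matrix.sub_apply, Matrix.add_apply, Matrix.single, Matrix.of_apply]
      by_cases hka : k = a
      · by_cases hia : i = a
        · simp [hka, hia, hab, Ne.symm hab, hMapp]; ring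
        · have hia' : a ≠ i := fun h => hia h.symm
          simp [hka, hia, hia', hab, Ne.symm hab, hMapp]; ring
      · have hka' : a ≠ k := fun h => hka h.symm
        by_cases hkb : k = b
        · by_cases hib : i = b
          · simp [hkb, hib, hka, hka', hab, Ne.symm hab, hMapp]; ring
          · have hib' : b ≠ i := fun h => hib h.symm
            simp [hkb, hib, hib', hka, hka', hab, Ne.symm hab, hMapp]; ring
        · have hkb' : b ≠ k := fun h => hkb h.symm
          simp [hka, hka', hkb, hkb', hMapp]; ring
    rw [Finset.sum_congr rfl fun k _ => hterm k]
    simp only [Finset.sum_add_distrib, Finset.sum_sub_distrib, ← Finset.mul_sum,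
      Finset.sum_ite_eq', Finset.mem_univ, if_true, e1]
    rw [Matrix.one_apply]
    by_cases hia : i = a
    · subst hia
      simp only [if_pos rfl, if_neg hab, hMapp]
      rw [hβ, hα]
      split_ifs <;> field_simp <;> ring
    · by_cases hib : i = b
      · subst hib
        simp only [if_neg hia, if_pos rfl, if_neg (Ne.symm hab), hMapp, hsymm]
        rw [hβ, hα]
        split_ifs <;> field_simp <;> ring
      · simp [hia, hib]
  exact ⟨isUnit_det_of_right_inverse key, inv_eq_right_inv key⟩
end

section
/- Let Σ be an n×n symmetric positive definite real matrix with Ω = Σ⁻¹, let a ≠ b be indices with Ω_{ab} ≠ 0, let c > 0, and set Σ' = Σ − (1/Ω_{aa})·E_{aa} + c·E_{bb}. Then Σ' is invertible and Ω' = (Σ')⁻¹ satisfies Ω'_{bb} = 1/c and Ω'_{ba} = Ω_{aa}/(c·Ω_{ab}). In particular, if Ω_{aa} > |Ω_{ab}| then Ω'_{bb} < |Ω'_{ba}|. -/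
open Matrix

private lemma sandwich {n : ℕ} (M : Matrix (Fin n) (Fin n) ℝ) (i j k l : Fin n) :
    single i j (1:ℝ) * M * single k l 1 = M j k • single i l 1 := by
  ext p q
  simp [mul_apply, Matrix.single, ite_and, Finset.sum_ite_eq, Finset.sum_ite_eq']
  aesop

private lemma triple_apply {n : ℕ} (M N : Matrix (Fin n) (Fin n) ℝ) (p q i j : Fin n) :
    (M * single p q (1:ℝ) * N) i j = M i p * N q j := by
  simp [mul_apply, Matrix.single, ite_and, Finset.sum_ite_eq, Finset.sum_ite_eq', mul_comm]

private lemma diag_pos {n : ℕ} {M : Matrix (Fin n) (Fin n) ℝ} (hM : M.PosDef) (i : Fin n) :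
    0 < M i i := by
  exact hM.diag_pos

private lemma key {n : ℕ} (S O : Matrix (Fin n) (Fin n) ℝ) (h1 : S * O = 1)
    (a b : Fin n) (c : ℝ) (hsym : O b a = O a b)
    (hα : O a a ≠ 0) (hβ : O a b ≠ 0) (hc : c ≠ 0) :
    (S - (1 / O a a) • single a a 1 + c • single b b 1) *
      (O + ((1 + c * O b b) / (c * (O a b) ^ 2)) • (O * single a a 1 * O)
        - (1 / O a b) • (O * single b a 1 * O)
        - (1 / O a b) • (O * single a b 1 * O)) = 1 := by
  simp only [mul_add, mul_sub, add_mul, sub_mul, smul_mul_assoc, mul_smul_comm, smul_smul,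
    ← Matrix.mul_assoc, h1, one_mul, sandwich, hsym]
  match_scalars <;> field_simp <;> ring

theorem stmt_13 {n : ℕ}
    (Sig : Matrix (Fin n) (Fin n) ℝ) (hPD : Sig.PosDef)
    (Om : Matrix (Fin n) (Fin n) ℝ) (hOm : Om = Sig⁻¹)
    (a b : Fin n) (hab : a ≠ b) (hOmab : Om a b ≠ 0)
    (c : ℝ) (hc : 0 < c)
    (Sig' : Matrix (Fin n) (Fin n) ℝ)
    (hSig' : Sig' = Sig - single a a (1 / Om a a) + single b b c) :
    IsUnit Sig'.det ∧
      Sig'⁻¹ b b = 1 / c ∧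
      Sig'⁻¹ b a = Om a a / (c * Om a b) ∧
      (|Om a b| < Om a a → Sig'⁻¹ b b < |Sig'⁻¹ b a|) := by
  have hdet : IsUnit Sig.det := isUnit_iff_ne_zero.mpr hPD.det_pos.ne'
  have h1 : Sig * Om = 1 := by rw [hOm]; exact mul_nonsing_inv _ hdet
  have hOmPD : Om.PosDef := hOm ▸ hPD.inv
  have hαpos : 0 < Om a a := diag_pos hOmPD a
  have hα : Om a a ≠ 0 := hαpos.ne'
  have hsym : Om b a = Om a b := by
    have := hOmPD.isHermitian.apply a b
    simpa using this
  have e1 : Sig' = Sig - (1 / Om a a) • single a a (1:ℝ)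
      + c • single b b (1:ℝ) := by
    rw [hSig']; simp
  set Q : Matrix (Fin n) (Fin n) ℝ :=
    Om + ((1 + c * Om b b) / (c * (Om a b) ^ 2)) • (Om * single a a 1 * Om)
      - (1 / Om a b) • (Om * single b a 1 * Om)
      - (1 / Om a b) • (Om * single a b 1 * Om) with hQdef
  have hQ1 : Sig' * Q = 1 := by
    rw [e1, hQdef]
    exact key Sig Om h1 a b c hsym hα hOmab hc.ne'
  have hinv : Sig'⁻¹ = Q := inv_eq_right_inv hQ1
  have hbb : Sig'⁻¹ b b = 1 / c := by
    rw [hinv, hQdef]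
    simp only [Matrix.add_apply, Matrix.sub_apply, Matrix.smul_apply, triple_apply,
      smul_eq_mul, hsym]
    field_simp
    ring
  have hba : Sig'⁻¹ b a = Om a a / (c * Om a b) := by
    rw [hinv, hQdef]
    simp only [Matrix.add_apply, Matrix.sub_apply, Matrix.smul_apply, triple_apply,
      smul_eq_mul, hsym]
    field_simp
    ring
  refine ⟨isUnit_det_of_right_inverse hQ1, hbb, hba, ?_⟩
  intro h
  rw [hbb, hba, abs_div, abs_mul, abs_of_pos hαpos, abs_of_pos hc]
  have hβpos : 0 < |Om a b| := abs_pos.mpr hOmab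
  rw [div_lt_div_iff₀ hc (by positivity)]
  nlinarith
end

section
/- Let Σ be an n×n positive definite real matrix with Ω = Σ⁻¹ and let a be an index. Then the matrix Σ^I = Σ − (1/Ω_{aa})·E_{aa} is positive semidefinite and singular (its smallest eigenvalue is 0). Consequently, for any index b ≠ a and any c > 0, the smallest eigenvalue of the symmetric matrix Σ − (1/Ω_{aa})·E_{aa} + c·E_{bb} is at most c. -/
open Matrix

theorem stmt_14 {n : ℕ}
    (Sig : Matrix (Fin n) (Fin n) ℝ) (hPD : Sig.PosDef) (a : Fin n) :
    (Sig - Matrix.single a a (1 / Sig⁻¹ a a)).PosSemidef ∧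
      (Sig - Matrix.single a a (1 / Sig⁻¹ a a)).det = 0 ∧
      ∀ b : Fin n, b ≠ a → ∀ c : ℝ, 0 < c →
        ∃ x : Fin n → ℝ, x ≠ 0 ∧
          x ⬝ᵥ ((Sig - Matrix.single a a (1 / Sig⁻¹ a a) + Matrix.single b b c) *ᵥ x)
            ≤ c * (x ⬝ᵥ x) := by
  have hΩ : (Sig⁻¹).PosDef := hPD.inv
  set ω : ℝ := Sig⁻¹ a a with hω
  -- positivity of ω
  have hu0 : (Pi.single a 1 : Fin n → ℝ) ≠ 0 := by
    intro h
    have := congrFun h a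
    simp at this
  have hωpos : 0 < ω := by
    have := hΩ.dotProduct_mulVec_pos hu0
    simpa [dotProduct_single, single_dotProduct] using this
  -- the kernel vector u = column a of Sig⁻¹
  set u : Fin n → ℝ := fun i => Sig⁻¹ i a with hudef
  have hinv : Sig * Sig⁻¹ = 1 :=
    Matrix.mul_nonsing_inv Sig (isUnit_iff_ne_zero.mpr hPD.det_pos.ne')
  have hSu : Sig *ᵥ u = Pi.single a 1 := by
    funext j
    have := congrFun (congrFun hinv j) a
    simp only [Matrix.mul_apply] at this
    simp [Matrix.mulVec, dotProduct, hudef, this, Matrix.one_apply, Pi.single_apply]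
  have hT : Sigᵀ = Sig := by
    rw [← Matrix.conjTranspose_eq_transpose_of_trivial]; exact hPD.isHermitian
  have hstd : ∀ (i : Fin n) (r : ℝ) (x : Fin n → ℝ),
      Matrix.single i i r *ᵥ x = Pi.single i (r * x i) := by
    intro i r x
    funext j
    simp [Matrix.mulVec, dotProduct, Matrix.single, Matrix.of_apply, Pi.single_apply,
      Finset.sum_ite_eq, ite_and, eq_comm]
  have hua : u a = ω := rfl
  have hu_ne : u ≠ 0 := by
    intro h
    have := congrFun h a
    rw [hua] at this
    exact hωpos.ne' this
  -- the kernel equation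
  have hker : (Sig - Matrix.single a a (1 / ω)) *ᵥ u = 0 := by
    rw [Matrix.sub_mulVec, hSu, hstd _, hua]
    rw [one_div, inv_mul_cancel₀ hωpos.ne']
    simp
  -- quadratic form identity
  have hquad : ∀ x : Fin n → ℝ,
      x ⬝ᵥ ((Sig - Matrix.single a a (1 / ω)) *ᵥ x)
        = (x - (x a / ω) • u) ⬝ᵥ (Sig *ᵥ (x - (x a / ω) • u)) := by
    intro x
    have h1 : u ⬝ᵥ (Sig *ᵥ x) = x a := by
      rw [Matrix.dotProduct_mulVec, ← Matrix.mulVec_transpose, hT, hSu,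
        single_dotProduct, one_mul]
    have h2 : x ⬝ᵥ (Sig *ᵥ u) = x a := by
      rw [hSu, dotProduct_single, mul_one]
    have h3 : u ⬝ᵥ (Sig *ᵥ u) = ω := by
      rw [hSu, dotProduct_single, mul_one, hua]
    rw [Matrix.sub_mulVec, dotProduct_sub, hstd _, dotProduct_single,
      Matrix.mulVec_sub, Matrix.mulVec_smul, dotProduct_sub, sub_dotProduct,
      sub_dotProduct, dotProduct_smul, dotProduct_smul, smul_dotProduct,
      smul_dotProduct, h1, h2, h3]
    simp only [smul_eq_mul]
    field_simp
    try ring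
  have hherm : (Sig - Matrix.single a a (1 / ω)).IsHermitian := by
    apply hPD.isHermitian.sub
    refine Matrix.IsHermitian.ext fun i j => ?_
    simp [Matrix.single, and_comm]
  refine ⟨Matrix.PosSemidef.of_dotProduct_mulVec_nonneg hherm ?_, ?_, ?_⟩
  · intro x
    have := hquad x
    simp only [star_trivial]
    rw [this]
    simpa using hPD.posSemidef.dotProduct_mulVec_nonneg (x - (x a / ω) • u)
  · exact Matrix.exists_mulVec_eq_zero_iff.mp ⟨u, hu_ne, hker⟩
  · intro b hb c hc
    refine ⟨u, hu_ne, ?_⟩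
    rw [Matrix.add_mulVec, hker, zero_add, hstd _, dotProduct_single]
    have h1 : u b * (c * u b) = c * (u b * u b) := by ring
    rw [h1]
    apply mul_le_mul_of_nonneg_left _ hc.le
    have : u b * u b ≤ ∑ i, u i * u i := by
      apply Finset.single_le_sum (f := fun i => u i * u i)
      · intro i _
        exact mul_self_nonneg _
      · exact Finset.mem_univ b
    simpa [dotProduct] using this
end

section
/- Let T be a tree on a finite vertex set V with at least 4 vertices and let Σ be a positive definite real matrix indexed by V whose conditional independence structure is given by T. Let i₁, i₂, i₃, i₄ be four distinct vertices. Then the following are equivalent: (a) there exists a vertex k of T such that i₁ and i₂ lie in a common connected component of T with k deleted that contains neither i₃ nor i₄; (b) Σ_{i₁i₃}·Σ_{i₂i₄} = Σ_{i₁i₄}·Σ_{i₂i₃}, Σ_{i₂i₁}·Σ_{i₃i₄} ≠ Σ_{i₃i₁}·Σ_{i₂i₄}, and Σ_{i₂i₁}·Σ_{i₃i₄} ≠ Σ_{i₄i₁}·Σ_{i₂i₃}. -/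
open Matrix

/-- `x` and `y` lie in a common connected component of `T` with `k` deleted
(the subgraph of `T` induced on `V \ {k}`). -/
def SameComp {V : Type*} (T : SimpleGraph V) (k x y : V) : Prop :=
  ∃ (hx : x ≠ k) (hy : y ≠ k),
    (T.induce {v : V | v ≠ k}).Reachable ⟨x, hx⟩ ⟨y, hy⟩

/-- Some connected component of `T` with `k` deleted contains `x` and `y` but
neither `z` nor `w`. -/
def PairSplit {V : Type*} (T : SimpleGraph V) (k x y z w : V) : Prop :=
  SameComp T k x y ∧ ¬ SameComp T k x z ∧ ¬ SameComp T k x w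

/-- Four distinct vertices form a non-star shape: there is a vertex `k` of `T`
such that some connected component of `T` with `k` deleted contains exactly two
of the four vertices. -/
def NonStar {V : Type*} (T : SimpleGraph V) (i₁ i₂ i₃ i₄ : V) : Prop :=
  ∃ k : V,
    PairSplit T k i₁ i₂ i₃ i₄ ∨ PairSplit T k i₁ i₃ i₂ i₄ ∨ PairSplit T k i₁ i₄ i₂ i₃ ∨
    PairSplit T k i₂ i₃ i₁ i₄ ∨ PairSplit T k i₂ i₄ i₁ i₃ ∨ PairSplit T k i₃ i₄ i₁ i₂

open SimpleGraph

section GraphPart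

variable {V : Type*} {T : SimpleGraph V} {k x y z a b c u : V}

lemma sameComp_refl (h : x ≠ k) : SameComp T k x x := ⟨h, h, Reachable.refl _⟩

lemma SameComp.symm' (h : SameComp T k x y) : SameComp T k y x := by
  obtain ⟨hx, hy, hr⟩ := h; exact ⟨hy, hx, hr.symm⟩

lemma SameComp.trans' (h : SameComp T k x y) (h' : SameComp T k y z) : SameComp T k x z := by
  obtain ⟨hx, hy, hr⟩ := h; obtain ⟨hy', hz, hr'⟩ := h'
  exact ⟨hx, hz, hr.trans hr'⟩

lemma SameComp.ne_left (h : SameComp T k x y) : x ≠ k := h.1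
lemma SameComp.ne_right (h : SameComp T k x y) : y ≠ k := h.2.1

lemma sameComp_of_adj (hx : x ≠ k) (hy : y ≠ k) (h : T.Adj x y) : SameComp T k x y :=
  ⟨hx, hy, Adj.reachable (by exact h)⟩

lemma sameComp_of_walk (p : T.Walk x y) (hk : k ∉ p.support) : SameComp T k x y := by
  induction p with
  | nil =>
    exact sameComp_refl (Ne.symm (by simpa using hk))
  | @cons v w y h q ih =>
    have hk' : k ∉ q.support := fun hm => hk (by simp [Walk.support_cons, hm])
    have hv : v ≠ k := Ne.symm (fun hm => hk (by simp [Walk.support_cons, ← hm]))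
    have hw : w ≠ k := fun hm => hk' (hm ▸ Walk.start_mem_support q)
    exact (sameComp_of_adj hv hw h).trans' (ih hk')

lemma walk_of_sameComp (h : SameComp T k x y) : ∃ p : T.Walk x y, k ∉ p.support := by
  obtain ⟨hx, hy, hr⟩ := h
  obtain ⟨q⟩ := hr
  refine ⟨q.map (Embedding.induce {v : V | v ≠ k}).toHom, ?_⟩
  intro hk
  erw [Walk.support_map, List.mem_map] at hk
  obtain ⟨a, _, ha⟩ := hk
  exact a.2 ha

end GraphPart

section TreePart

set_option linter.unusedSectionVars false

variable {V : Type*} [DecidableEq V] {T : SimpleGraph V} (hT : T.IsTree)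
variable {k x y z a b c u m n : V}

/-- The unique path between two vertices of a tree. -/
noncomputable def tp (hT : T.IsTree) (a b : V) : T.Walk a b :=
  (hT.existsUnique_path a b).choose

lemma tp_isPath : (tp hT a b).IsPath := (hT.existsUnique_path a b).choose_spec.1

lemma tp_unique {p : T.Walk a b} (hp : p.IsPath) : p = tp hT a b :=
  (hT.existsUnique_path a b).choose_spec.2 p hp

lemma tp_reverse : (tp hT a b).reverse = tp hT b a := tp_unique hT (tp_isPath hT).reverse

lemma mem_tp_symm (h : x ∈ (tp hT a b).support) : x ∈ (tp hT b a).support := by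
  rw [← tp_reverse hT, Walk.support_reverse, List.mem_reverse]; exact h

lemma takeUntil_tp (h : u ∈ (tp hT a b).support) :
    (tp hT a b).takeUntil u h = tp hT a u := tp_unique hT ((tp_isPath hT).takeUntil h)

lemma dropUntil_tp (h : u ∈ (tp hT a b).support) :
    (tp hT a b).dropUntil u h = tp hT u b := tp_unique hT ((tp_isPath hT).dropUntil h)

lemma mem_tp_split (h : u ∈ (tp hT a b).support) (hx : x ∈ (tp hT a b).support) :
    x ∈ (tp hT a u).support ∨ x ∈ (tp hT u b).support := by
  rw [← takeUntil_tp hT h, ← dropUntil_tp hT h]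
  rw [← Walk.take_spec (tp hT a b) h, Walk.mem_support_append_iff] at hx
  exact hx

lemma mem_tp_left (h : u ∈ (tp hT a b).support) (hx : x ∈ (tp hT a u).support) :
    x ∈ (tp hT a b).support := by
  rw [← takeUntil_tp hT h] at hx
  exact Walk.support_takeUntil_subset _ h hx

lemma mem_tp_right (h : u ∈ (tp hT a b).support) (hx : x ∈ (tp hT u b).support) :
    x ∈ (tp hT a b).support := by
  rw [← dropUntil_tp hT h] at hx
  exact Walk.support_dropUntil_subset _ h hx

lemma eq_of_mem_both (h : u ∈ (tp hT a b).support) (h1 : x ∈ (tp hT a u).support)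
    (h2 : x ∈ (tp hT u b).support) : x = u := by
  by_contra hxu
  have hnd := (tp_isPath hT (a := a) (b := b)).support_nodup
  rw [← Walk.take_spec (tp hT a b) h, Walk.support_append, List.nodup_append] at hnd
  rw [← takeUntil_tp hT h] at h1
  rw [← dropUntil_tp hT h] at h2
  have h2' : x ∈ ((tp hT a b).dropUntil u h).support.tail := by
    rcases List.mem_cons.mp (by rw [← Walk.support_eq_cons]; exact h2) with h | h
    · exact absurd h hxu
    · exact h
  exact hnd.2.2 x h1 x h2' rfl

lemma not_sameComp_of_mem (h : u ∈ (tp hT a b).support) : ¬ SameComp T u a b := by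
  intro hs
  by_cases hua : a = u
  · exact hs.ne_left hua
  by_cases hub : b = u
  · exact hs.ne_right hub
  obtain ⟨p, hp⟩ := walk_of_sameComp hs
  have hpath : (p.toPath : T.Walk a b) = tp hT a b := tp_unique hT p.toPath.2
  have : u ∈ (p.toPath : T.Walk a b).support := by rw [hpath]; exact h
  exact hp (Walk.support_toPath_subset p this)

lemma sameComp_of_not_mem (h : u ∉ (tp hT a b).support) : SameComp T u a b :=
  sameComp_of_walk (tp hT a b) h

lemma not_mem_of_sameComp (hs : SameComp T u a b) : u ∉ (tp hT a b).support :=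
  fun h => not_sameComp_of_mem hT h hs

lemma med_aux (b : V) : ∀ (k a : V) (p : T.Walk k a), p.IsPath →
    ∃ u, u ∈ p.support ∧ u ∈ (tp hT a b).support ∧ u ∈ (tp hT k b).support := by
  intro k a p
  induction p with
  | nil => exact fun _ => ⟨_, by simp, Walk.start_mem_support _, Walk.start_mem_support _⟩
  | @cons v w y h q ih =>
    intro hp
    rw [Walk.cons_isPath_iff] at hp
    obtain ⟨u, hu1, hu2, hu3⟩ := ih hp.1
    by_cases hk : v ∈ (tp hT w b).support
    · by_cases hu : u ∈ (tp hT v b).support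
      · exact ⟨u, by simp [Walk.support_cons, hu1], hu2, hu⟩
      · have hvw : v ≠ w := h.ne
        have htpwv : Walk.cons h.symm Walk.nil = tp hT w v := by
          refine tp_unique hT ?_
          simp [Walk.cons_isPath_iff, hvw.symm]
        have huw : u = w := by
          rcases mem_tp_split hT hk hu3 with h1 | h1
          · rw [← htpwv] at h1
            simp [Walk.support_cons] at h1
            rcases h1 with h1 | h1
            · exact h1
            · exact absurd h1 (by rintro rfl; exact hp.2 hu1)
          · exact absurd h1 hu
        subst huw
        exact ⟨v, by simp [Walk.support_cons], mem_tp_right hT hu2 hk,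
          Walk.start_mem_support _⟩
    · have hcons : (Walk.cons h (tp hT w b)).IsPath := by
        rw [Walk.cons_isPath_iff]; exact ⟨tp_isPath hT, hk⟩
      refine ⟨u, by simp [Walk.support_cons, hu1], hu2, ?_⟩
      rw [← tp_unique hT hcons]
      simp [Walk.support_cons, hu3]

lemma exists_median (a b k : V) : ∃ u, u ∈ (tp hT a b).support ∧ u ∈ (tp hT a k).support ∧
    u ∈ (tp hT b k).support := by
  obtain ⟨u, h1, h2, h3⟩ := med_aux hT b k a (tp hT k a) (tp_isPath hT)
  refine ⟨u, h2, ?_, mem_tp_symm hT h3⟩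
  rw [← tp_reverse hT, Walk.support_reverse, List.mem_reverse] at h1
  exact h1

end TreePart

section Quartet

set_option linter.unusedSectionVars false

variable {V : Type*} [DecidableEq V] {T : SimpleGraph V} (hT : T.IsTree)

lemma quartet (i1 i2 i3 i4 : V) :
    (∃ k, PairSplit T k i1 i2 i3 i4) ∨ (∃ k, PairSplit T k i1 i3 i2 i4) ∨
    (∃ k, PairSplit T k i1 i4 i2 i3) ∨
    (∃ m, m ∈ (tp hT i1 i2).support ∧ m ∈ (tp hT i1 i3).support ∧
      m ∈ (tp hT i1 i4).support ∧ m ∈ (tp hT i2 i3).support ∧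
      m ∈ (tp hT i2 i4).support ∧ m ∈ (tp hT i3 i4).support) := by
  obtain ⟨m, hm12, hm13, hm23⟩ := exists_median hT i1 i2 i3
  obtain ⟨n, hn12, hn14, hn24⟩ := exists_median hT i1 i2 i4
  by_cases hmn : m = n
  · subst hmn
    obtain ⟨q, hq34, hq3m, hq4m⟩ := exists_median hT i3 i4 m
    by_cases hqm : q = m
    · subst hqm
      exact Or.inr (Or.inr (Or.inr ⟨q, hm12, hm13, hn14, hm23, hn24, hq34⟩))
    · -- PairSplit q i1 i2 i3 i4
      have f1 : q ∉ (tp hT m i1).support := fun hq =>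
        hqm (eq_of_mem_both hT (mem_tp_symm hT hm13) hq3m hq)
      have f2 : q ∉ (tp hT m i2).support := fun hq =>
        hqm (eq_of_mem_both hT (mem_tp_symm hT hm23) hq3m hq)
      have f3 : q ∉ (tp hT i1 i2).support := by
        intro hq
        rcases mem_tp_split hT hm12 hq with h | h
        · exact f1 (mem_tp_symm hT h)
        · exact f2 h
      have g3 : q ∈ (tp hT i1 i3).support := mem_tp_right hT hm13 (mem_tp_symm hT hq3m)
      have g4 : q ∈ (tp hT i1 i4).support := mem_tp_right hT hn14 (mem_tp_symm hT hq4m)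
      exact Or.inl ⟨q, sameComp_of_not_mem hT f3, not_sameComp_of_mem hT g3,
        not_sameComp_of_mem hT g4⟩
  · rcases mem_tp_split hT hm12 hn12 with hn1m | hnm2
    · -- n between i1 and m : PairSplit m i1 i4 i2 i3
      have e1 : m ∉ (tp hT i1 n).support := fun hq =>
        hmn (eq_of_mem_both hT hn1m hq (Walk.end_mem_support _))
      have e2 : m ∈ (tp hT n i2).support := by
        rcases mem_tp_split hT hn12 hm12 with h | h
        · exact absurd h e1
        · exact h
      have e3 : m ∉ (tp hT n i4).support := fun hq =>
        hmn (eq_of_mem_both hT hn24 (mem_tp_symm hT e2) hq)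
      have e4 : m ∉ (tp hT i1 i4).support := by
        intro hq
        rcases mem_tp_split hT hn14 hq with h | h
        · exact e1 h
        · exact e3 h
      exact Or.inr (Or.inr (Or.inl ⟨m, sameComp_of_not_mem hT e4,
        not_sameComp_of_mem hT hm12, not_sameComp_of_mem hT hm13⟩))
    · -- n between m and i2 : PairSplit n i1 i3 i2 i4
      have d1 : n ∉ (tp hT i1 m).support := fun hq =>
        Ne.symm hmn (eq_of_mem_both hT hm12 hq hnm2)
      have d2 : n ∉ (tp hT m i3).support := fun hq =>
        Ne.symm hmn (eq_of_mem_both hT hm23 (mem_tp_symm hT hnm2) hq)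
      have d3 : n ∉ (tp hT i1 i3).support := by
        intro hq
        rcases mem_tp_split hT hm13 hq with h | h
        · exact d1 h
        · exact d2 h
      exact Or.inr (Or.inl ⟨n, sameComp_of_not_mem hT d3,
        not_sameComp_of_mem hT hn12, not_sameComp_of_mem hT hn14⟩)

end Quartet

section Algebra

variable {V : Type*} [Fintype V] [DecidableEq V] {T : SimpleGraph V}
variable {Sig : Matrix V V ℝ}

lemma sym (hPD : Sig.PosDef) (x y : V) : Sig x y = Sig y x := by
  have := hPD.isHermitian.apply y x
  simpa using this

lemma diag_pos_s15 (hPD : Sig.PosDef) (x : V) : 0 < Sig x x := by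
  have h := hPD.dotProduct_mulVec_pos (x := Pi.single x 1) (fun h0 => by simpa using congrFun h0 x)
  simpa [Matrix.mulVec_single, single_dotProduct] using h

lemma cs_strict (hPD : Sig.PosDef) {u k : V} (h : u ≠ k) :
    Sig u k * Sig u k < Sig u u * Sig k k := by
  have hkk := diag_pos_s15 hPD k
  set v : V → ℝ := Pi.single u (Sig k k) - Pi.single k (Sig u k) with hv
  have hv0 : v ≠ 0 := by
    intro h0
    have := congrFun h0 u
    simp [hv, Pi.single_apply, h, Ne.symm h] at this
    exact hkk.ne' this
  have hq := hPD.dotProduct_mulVec_pos hv0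
  have hstar : star v = v := by
    funext i; simp [hv]
  rw [hstar] at hq
  have hcalc : v ⬝ᵥ Sig *ᵥ v = Sig k k * (Sig u u * Sig k k - Sig u k * Sig u k) := by
    simp only [hv, Matrix.mulVec_sub, Matrix.mulVec_single, sub_dotProduct,
      single_dotProduct, dotProduct_sub, Pi.sub_apply, Pi.smul_apply, Matrix.col_apply, op_smul_eq_mul]
    rw [sym hPD k u]
    ring
  nlinarith [hq, hcalc, hkk]

lemma mulVec_col (hPD : Sig.PosDef) (j : V) :
    (Sig⁻¹ *ᵥ fun x => Sig x j) = fun x => if x = j then (1 : ℝ) else 0 := by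
  funext x
  have h1 : Sig⁻¹ * Sig = 1 := Matrix.nonsing_inv_mul Sig (Ne.isUnit hPD.det_pos.ne')
  calc (Sig⁻¹ *ᵥ fun y => Sig y j) x = (Sig⁻¹ * Sig) x j := by
        simp [Matrix.mulVec, Matrix.mul_apply, dotProduct]
    _ = _ := by rw [h1, Matrix.one_apply]

lemma quad_zero (hPD : Sig.PosDef) (u : V → ℝ) (h : ∀ x, u x ≠ 0 → (Sig⁻¹ *ᵥ u) x = 0) :
    u = 0 := by
  by_contra hu
  have hq := hPD.inv.dotProduct_mulVec_pos hu
  have hstar : star u = u := by funext i; simp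
  rw [hstar] at hq
  have hzero : u ⬝ᵥ (Sig⁻¹ *ᵥ u) = 0 := by
    show ∑ x, u x * (Sig⁻¹ *ᵥ u) x = 0
    apply Finset.sum_eq_zero
    intro x _
    by_cases hx : u x = 0
    · simp [hx]
    · simp [h x hx]
  rw [hzero] at hq
  exact lt_irrefl 0 hq

lemma K_zero (hCI : CondIndepStruct Sig T) {x y : V} (hxy : x ≠ y) (hAdj : ¬ T.Adj x y) :
    Sig⁻¹ x y = 0 := by
  by_contra h; exact hAdj ((hCI x y hxy).1 h)

lemma factor_core (hPD : Sig.PosDef) (hCI : CondIndepStruct Sig T) {i j k : V}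
    (hik : i ≠ k) (hjk : j ≠ k) (hn : ¬ SameComp T k i j) :
    Sig i j * Sig k k = Sig i k * Sig k j := by
  classical
  have hkk := diag_pos_s15 hPD k
  set c : ℝ := Sig k j / Sig k k with hc
  set w : V → ℝ := fun x => Sig x j - c * Sig x k with hw
  set u : V → ℝ := fun x => if SameComp T k i x then w x else 0 with hu
  have hKw : ∀ x, (Sig⁻¹ *ᵥ w) x = (if x = j then 1 else 0) - c * (if x = k then 1 else 0) := by
    intro x
    have hwx : w = (fun y => Sig y j) - c • (fun y => Sig y k) := by
      funext y; simp [hw, smul_eq_mul]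
    rw [hwx, Matrix.mulVec_sub, Matrix.mulVec_smul]
    simp [mulVec_col hPD, Pi.sub_apply, Pi.smul_apply, smul_eq_mul]
  have hwk : w k = 0 := by
    simp only [hw, hc]
    field_simp
    ring
  have key : ∀ x, SameComp T k i x → (Sig⁻¹ *ᵥ u) x = 0 := by
    intro x hx
    have hxk : x ≠ k := hx.ne_right
    have hxj : x ≠ j := fun e => hn (e ▸ hx)
    have heq : (Sig⁻¹ *ᵥ u) x = (Sig⁻¹ *ᵥ w) x := by
      show ∑ y, Sig⁻¹ x y * u y = ∑ y, Sig⁻¹ x y * w y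
      apply Finset.sum_congr rfl
      intro y _
      by_cases hy : SameComp T k i y
      · simp [hu, hy]
      · simp only [hu, if_neg hy]
        by_cases hyk : y = k
        · subst hyk; rw [hwk]
        · by_cases hxy : x = y
          · exact absurd (hxy ▸ hx) hy
          · by_cases hAdj : T.Adj x y
            · exact absurd (hx.trans' (sameComp_of_adj hxk hyk hAdj)) hy
            · rw [K_zero hCI hxy hAdj]; ring
    rw [heq, hKw x, if_neg hxj, if_neg hxk]; ring
  have hu0 : u = 0 := by
    apply quad_zero hPD
    intro x hx
    apply key
    by_contra hxc
    exact hx (by simp [hu, hxc])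
  have hwi : w i = 0 := by
    have := congrFun hu0 i
    simpa [hu, sameComp_refl hik] using this
  have hSig : Sig i j = c * Sig i k := by
    simp only [hw] at hwi; linarith
  rw [hSig, hc]
  field_simp

lemma factor_mem (hT : T.IsTree) (hPD : Sig.PosDef) (hCI : CondIndepStruct Sig T) {i j k : V}
    (h : k ∈ (tp hT i j).support) :
    Sig i j * Sig k k = Sig i k * Sig k j := by
  by_cases hki : k = i
  · subst hki; ring
  by_cases hkj : k = j
  · subst hkj; ring
  · exact factor_core hPD hCI (Ne.symm hki) (Ne.symm hkj) (not_sameComp_of_mem hT h)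

lemma edge_ne_zero (hT : T.IsTree) (hPD : Sig.PosDef) (hCI : CondIndepStruct Sig T)
    {i j : V} (hAdj : T.Adj i j) : Sig i j ≠ 0 := by
  classical
  intro h0
  have hij : i ≠ j := hAdj.ne
  have hjj := diag_pos_s15 hPD j
  have hKij : Sig⁻¹ i j ≠ 0 := (hCI i j hij).2 hAdj
  set u : V → ℝ := fun x => if SameComp T j i x then Sig x j else 0 with hu
  have huniq : ∀ x, SameComp T j i x → T.Adj x j → x = i := by
    intro x hx hxj
    by_contra hxi
    have hji : j ∉ (tp hT i x).support := not_mem_of_sameComp hT hx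
    have hp1 : (Walk.cons hxj.symm Walk.nil : T.Walk j x).IsPath := by
      simp [Walk.cons_isPath_iff, hxj.ne']
    have hp2 : (Walk.cons hAdj.symm (tp hT i x) : T.Walk j x).IsPath := by
      rw [Walk.cons_isPath_iff]
      exact ⟨tp_isPath hT, hji⟩
    have heq : (Walk.cons hxj.symm Walk.nil : T.Walk j x) = Walk.cons hAdj.symm (tp hT i x) :=
      (tp_unique hT hp1).trans (tp_unique hT hp2).symm
    have hlen := congrArg Walk.length heq
    simp only [Walk.length_cons, Walk.length_nil] at hlen
    have hlen0 : (tp hT i x).length = 0 := by omega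
    exact hxi (Walk.eq_of_length_eq_zero hlen0).symm
  have key : ∀ x, u x ≠ 0 → (Sig⁻¹ *ᵥ u) x = 0 := by
    intro x hux
    have hx : SameComp T j i x := by
      by_contra hc; exact hux (by simp [hu, hc])
    have hxi : x ≠ i := by
      intro e; subst e
      exact hux (by simp [hu, hx, h0])
    have hxj : x ≠ j := hx.ne_right
    have hKxj : Sig⁻¹ x j = 0 := by
      by_cases hadj : T.Adj x j
      · exact absurd (huniq x hx hadj) hxi
      · exact K_zero hCI hxj hadj
    have hdiff : (∑ y, Sig⁻¹ x y * Sig y j) - ∑ y, Sig⁻¹ x y * u y = Sig⁻¹ x j * Sig j j := by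
      rw [← Finset.sum_sub_distrib]
      rw [Finset.sum_eq_single j]
      · have huj : u j = 0 := by
          simp only [hu]
          rw [if_neg]
          intro hc
          exact hc.ne_right rfl
        rw [huj]; ring
      · intro y _ hyj
        by_cases hy : SameComp T j i y
        · simp only [hu, if_pos hy]; ring
        · have hKxy : Sig⁻¹ x y = 0 := by
            by_cases hxy : x = y
            · exact absurd (hxy ▸ hx) hy
            by_cases hadj : T.Adj x y
            · exact absurd (hx.trans' (sameComp_of_adj hxj hyj hadj)) hy
            · exact K_zero hCI hxy hadj
          simp [hu, hy, hKxy]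
      · intro hc
        exact absurd (Finset.mem_univ j) hc
    have hcol : (∑ y, Sig⁻¹ x y * Sig y j) = 0 := by
      have := congrFun (mulVec_col hPD j) x
      rw [if_neg hxj] at this
      exact this
    show ∑ y, Sig⁻¹ x y * u y = 0
    rw [hKxj, zero_mul] at hdiff
    rw [hcol] at hdiff
    linarith
  have hu0 : u = 0 := quad_zero hPD u key
  have hzero : ∀ y, SameComp T j i y → Sig y j = 0 := by
    intro y hy
    have := congrFun hu0 y
    simpa [hu, if_pos hy] using this
  have hcoli : (∑ y, Sig⁻¹ i y * Sig y j) = 0 := by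
    have := congrFun (mulVec_col hPD j) i
    rw [if_neg hij] at this
    exact this
  have hsingle : (∑ y, Sig⁻¹ i y * Sig y j) = Sig⁻¹ i j * Sig j j := by
    rw [Finset.sum_eq_single j]
    · intro y _ hyj
      by_cases hyi : y = i
      · subst hyi; rw [h0]; ring
      · by_cases hadj : T.Adj i y
        · rw [hzero y (sameComp_of_adj hij hyj hadj)]; ring
        · rw [K_zero hCI (Ne.symm hyi) hadj]; ring
    · intro hc
      exact absurd (Finset.mem_univ j) hc
  rw [hsingle] at hcoli
  rcases mul_eq_zero.mp hcoli with h | h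
  · exact hKij h
  · exact hjj.ne' h

lemma sig_ne_zero_aux (hT : T.IsTree) (hPD : Sig.PosDef) (hCI : CondIndepStruct Sig T) :
    ∀ {i j : V} (p : T.Walk i j), p.IsPath → Sig i j ≠ 0 := by
  intro i j p
  induction p with
  | nil => exact fun _ => (diag_pos_s15 hPD _).ne'
  | @cons i x j h q ih =>
    intro hp
    by_cases hxj : x = j
    · subst hxj; exact edge_ne_zero hT hPD hCI h
    · have hq := hp.of_cons
      have hxjne := ih hq
      have hx : x ∈ (tp hT i j).support := by
        rw [← tp_unique hT hp]; simp [Walk.support_cons]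
      have hf := factor_mem hT hPD hCI hx
      intro h0
      rw [h0, zero_mul] at hf
      exact (mul_ne_zero (edge_ne_zero hT hPD hCI h) hxjne) hf.symm

lemma sig_ne_zero (hT : T.IsTree) (hPD : Sig.PosDef) (hCI : CondIndepStruct Sig T) (i j : V) :
    Sig i j ≠ 0 :=
  sig_ne_zero_aux hT hPD hCI (tp hT i j) (tp_isPath hT)

end Algebra

section MainLemmas

set_option linter.unusedSectionVars false
set_option maxHeartbeats 1000000

variable {V : Type*} [Fintype V] [DecidableEq V] {T : SimpleGraph V} {Sig : Matrix V V ℝ}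

lemma cross_eq (hT : T.IsTree) (hPD : Sig.PosDef) (hCI : CondIndepStruct Sig T)
    {k a b c d : V} (hcd : c ≠ d) (hsplit : PairSplit T k a b c d) :
    Sig a c * Sig b d = Sig a d * Sig b c := by
  obtain ⟨hab, hac, had⟩ := hsplit
  have hak : a ≠ k := hab.ne_left
  have hbk : b ≠ k := hab.ne_right
  have hbc : ¬ SameComp T k b c := fun h => hac (hab.trans' h)
  have hbd : ¬ SameComp T k b d := fun h => had (hab.trans' h)
  have hkk := (diag_pos_s15 hPD k).ne'
  by_cases hck : c = k
  · subst hck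
    have hdk : d ≠ c := Ne.symm hcd
    have h1 := factor_core hPD hCI hbk hdk hbd
    have h2 := factor_core hPD hCI hak hdk had
    apply mul_right_cancel₀ hkk
    linear_combination Sig a c * h1 - Sig b c * h2
  by_cases hdk : d = k
  · subst hdk
    have h1 := factor_core hPD hCI hak hck hac
    have h2 := factor_core hPD hCI hbk hck hbc
    apply mul_right_cancel₀ hkk
    linear_combination Sig b d * h1 - Sig a d * h2
  · have h1 := factor_core hPD hCI hak hck hac
    have h2 := factor_core hPD hCI hbk hdk hbd
    have h3 := factor_core hPD hCI hak hdk had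
    have h4 := factor_core hPD hCI hbk hck hbc
    apply mul_right_cancel₀ (mul_ne_zero hkk hkk)
    linear_combination (Sig b d * Sig k k) * h1 + (Sig a k * Sig k c) * h2
      - (Sig b c * Sig k k) * h3 - (Sig a k * Sig k d) * h4

lemma cross_ne (hT : T.IsTree) (hPD : Sig.PosDef) (hCI : CondIndepStruct Sig T)
    {k a b c d : V} (hcd : c ≠ d) (hsplit : PairSplit T k a b c d) :
    Sig a b * Sig c d ≠ Sig a c * Sig b d := by
  obtain ⟨hab, hac, had⟩ := hsplit
  have hak : a ≠ k := hab.ne_left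
  have hbk : b ≠ k := hab.ne_right
  have hbc : ¬ SameComp T k b c := fun h => hac (hab.trans' h)
  have hbd : ¬ SameComp T k b d := fun h => had (hab.trans' h)
  have hkk := diag_pos_s15 hPD k
  have nz := sig_ne_zero hT hPD hCI
  obtain ⟨u, hu_ab, hu_ak, hu_bk⟩ := exists_median hT a b k
  have hknab : k ∉ (tp hT a b).support := not_mem_of_sameComp hT hab
  have huk : u ≠ k := fun e => hknab (e ▸ hu_ab)
  have hcs : Sig u k * Sig u k < Sig u u * Sig k k := cs_strict hPD huk
  have r1 := factor_mem hT hPD hCI hu_ab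
  have r2 := factor_mem hT hPD hCI hu_ak
  have r3 := factor_mem hT hPD hCI hu_bk
  rw [sym hPD b u] at r3
  intro heq
  by_cases hck : c = k
  · subst hck
    have hdk : d ≠ c := Ne.symm hcd
    have rbd := factor_core hPD hCI hbk hdk hbd
    have e1 : Sig a b * Sig c d * (Sig u u * Sig u u * Sig c c) =
        Sig a u * Sig u b * Sig c d * (Sig u u * Sig c c) := by
      linear_combination (Sig u u * Sig c c * Sig c d) * r1
    have e2 : Sig a c * Sig b d * (Sig u u * Sig u u * Sig c c) =
        Sig a u * Sig u b * Sig c d * (Sig u c * Sig u c) := by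
      linear_combination (Sig b d * Sig c c * Sig u u) * r2
        + (Sig a u * Sig u c * Sig u u) * rbd + (Sig a u * Sig u c * Sig c d) * r3
    have key : (Sig a u * Sig u b * Sig c d) * (Sig u u * Sig c c) =
        (Sig a u * Sig u b * Sig c d) * (Sig u c * Sig u c) := by
      linear_combination (Sig u u * Sig u u * Sig c c) * heq - e1 + e2
    have hfz : Sig a u * Sig u b * Sig c d ≠ 0 :=
      mul_ne_zero (mul_ne_zero (nz a u) (nz u b)) (nz c d)
    have := mul_left_cancel₀ hfz key
    -- Sig u u * Sig c c = Sig u c * Sig u c, c plays the role of k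
    linarith [hcs]
  by_cases hdk : d = k
  · subst hdk
    have rac := factor_core hPD hCI hak hck hac
    rw [sym hPD d c] at rac
    have e1 : Sig a b * Sig c d * (Sig u u * Sig u u * Sig d d) =
        Sig a u * Sig u b * Sig c d * (Sig u u * Sig d d) := by
      linear_combination (Sig u u * Sig d d * Sig c d) * r1
    have e2 : Sig a c * Sig b d * (Sig u u * Sig u u * Sig d d) =
        Sig a u * Sig u b * Sig c d * (Sig u d * Sig u d) := by
      linear_combination (Sig b d * Sig u u * Sig u u) * rac
        + (Sig a d * Sig c d * Sig u u) * r3 + (Sig u b * Sig u d * Sig c d) * r2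
    have key : (Sig a u * Sig u b * Sig c d) * (Sig u u * Sig d d) =
        (Sig a u * Sig u b * Sig c d) * (Sig u d * Sig u d) := by
      linear_combination (Sig u u * Sig u u * Sig d d) * heq - e1 + e2
    have hfz : Sig a u * Sig u b * Sig c d ≠ 0 :=
      mul_ne_zero (mul_ne_zero (nz a u) (nz u b)) (nz c d)
    have := mul_left_cancel₀ hfz key
    linarith [hcs]
  · have rac := factor_core hPD hCI hak hck hac
    rw [sym hPD k c] at rac
    have rbd := factor_core hPD hCI hbk hdk hbd
    have eac : Sig a c * (Sig u u * Sig k k) = Sig a u * Sig u k * Sig c k := by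
      linear_combination Sig u u * rac + Sig c k * r2
    have ebd : Sig b d * (Sig u u * Sig k k) = Sig u b * Sig u k * Sig k d := by
      linear_combination Sig u u * rbd + Sig k d * r3
    by_cases hscd : SameComp T k c d
    · obtain ⟨w, hw_cd, hw_ck, hw_dk⟩ := exists_median hT c d k
      have hkncd : k ∉ (tp hT c d).support := not_mem_of_sameComp hT hscd
      have hwk : w ≠ k := fun e => hkncd (e ▸ hw_cd)
      have hcsw : Sig w k * Sig w k < Sig w w * Sig k k := cs_strict hPD hwk
      have s1 := factor_mem hT hPD hCI hw_cd
      have s2 := factor_mem hT hPD hCI hw_ck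
      have s3 := factor_mem hT hPD hCI hw_dk
      rw [sym hPD d w] at s3
      have eac2 : Sig a c * (Sig u u * Sig k k * Sig w w) =
          Sig a u * Sig u k * (Sig c w * Sig w k) := by
        linear_combination Sig w w * eac + (Sig a u * Sig u k) * s2
      have ebd2 : Sig b d * (Sig u u * Sig k k * Sig w w) =
          Sig u b * Sig u k * (Sig w d * Sig w k) := by
        linear_combination Sig w w * ebd + (Sig u b * Sig u k) * s3
          + (Sig u b * Sig u k * Sig w w) * (sym hPD k d)
      have e1 : Sig a b * Sig c d * (Sig u u * Sig w w) =
          Sig a u * Sig u b * (Sig c w * Sig w d) := by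
        linear_combination (Sig c d * Sig w w) * r1 + (Sig a u * Sig u b) * s1
      have e2 : Sig a c * Sig b d *
            ((Sig u u * Sig k k * Sig w w) * (Sig u u * Sig k k * Sig w w)) =
          Sig a u * Sig u b * (Sig c w * Sig w d) *
            ((Sig u k * Sig u k) * (Sig w k * Sig w k)) := by
        linear_combination (Sig b d * (Sig u u * Sig k k * Sig w w)) * eac2
          + (Sig a u * Sig u k * (Sig c w * Sig w k)) * ebd2
      have key : (Sig a u * Sig u b * (Sig c w * Sig w d)) *
            ((Sig u u * Sig k k) * (Sig w w * Sig k k)) =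
          (Sig a u * Sig u b * (Sig c w * Sig w d)) *
            ((Sig u k * Sig u k) * (Sig w k * Sig w k)) := by
        linear_combination ((Sig u u * Sig k k * Sig w w) * (Sig u u * Sig k k * Sig w w)) * heq
          - (Sig u u * Sig k k * Sig k k * Sig w w) * e1 + e2
      have hfz : Sig a u * Sig u b * (Sig c w * Sig w d) ≠ 0 :=
        mul_ne_zero (mul_ne_zero (nz a u) (nz u b)) (mul_ne_zero (nz c w) (nz w d))
      have h5 := mul_left_cancel₀ hfz key
      have hUK : 0 < Sig u u * Sig k k := mul_pos (diag_pos_s15 hPD u) hkk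
      have hWK : 0 < Sig w w * Sig k k := mul_pos (diag_pos_s15 hPD w) hkk
      nlinarith [h5, hcs, hcsw, hUK, hWK, mul_self_nonneg (Sig u k), mul_self_nonneg (Sig w k),
        mul_le_mul_of_nonneg_right (le_of_lt hcs) (mul_self_nonneg (Sig w k)),
        mul_lt_mul_of_pos_left hcsw hUK]
    · have rcd := factor_core hPD hCI hck hdk hscd
      rw [sym hPD c k] at rcd
      have e1 : Sig a b * Sig c d * (Sig u u * Sig k k) =
          Sig a u * Sig u b * (Sig k c * Sig k d) := by
        linear_combination (Sig c d * Sig k k) * r1 + (Sig a u * Sig u b) * rcd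
      have e2 : Sig a c * Sig b d * ((Sig u u * Sig k k) * (Sig u u * Sig k k)) =
          Sig a u * Sig u b * (Sig k c * Sig k d) * (Sig u k * Sig u k) := by
        linear_combination (Sig b d * (Sig u u * Sig k k)) * eac
          + (Sig a u * Sig u k * Sig c k) * ebd
          + (Sig a u * Sig u k * Sig u k * Sig u b * Sig k d) * (sym hPD c k)
      have key : (Sig a u * Sig u b * (Sig k c * Sig k d)) * (Sig u u * Sig k k) =
          (Sig a u * Sig u b * (Sig k c * Sig k d)) * (Sig u k * Sig u k) := by
        linear_combination ((Sig u u * Sig k k) * (Sig u u * Sig k k)) * heq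
          - (Sig u u * Sig k k) * e1 + e2
      have hfz : Sig a u * Sig u b * (Sig k c * Sig k d) ≠ 0 :=
        mul_ne_zero (mul_ne_zero (nz a u) (nz u b)) (mul_ne_zero (nz k c) (nz k d))
      have := mul_left_cancel₀ hfz key
      linarith [hcs]

end MainLemmas

theorem stmt_15 {V : Type*} [Fintype V] [DecidableEq V]
    (T : SimpleGraph V) (hTree : T.IsTree) (hcard : 4 ≤ Fintype.card V)
    (Sig : Matrix V V ℝ) (hPD : Sig.PosDef) (hCI : CondIndepStruct Sig T)
    (i₁ i₂ i₃ i₄ : V)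
    (h12 : i₁ ≠ i₂) (h13 : i₁ ≠ i₃) (h14 : i₁ ≠ i₄)
    (h23 : i₂ ≠ i₃) (h24 : i₂ ≠ i₄) (h34 : i₃ ≠ i₄) :
    (∃ k : V, PairSplit T k i₁ i₂ i₃ i₄) ↔
      (Sig i₁ i₃ * Sig i₂ i₄ = Sig i₁ i₄ * Sig i₂ i₃ ∧
        Sig i₂ i₁ * Sig i₃ i₄ ≠ Sig i₃ i₁ * Sig i₂ i₄ ∧
        Sig i₂ i₁ * Sig i₃ i₄ ≠ Sig i₄ i₁ * Sig i₂ i₃) := by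
  constructor
  · rintro ⟨k, hs⟩
    have hs' : PairSplit T k i₁ i₂ i₄ i₃ := ⟨hs.1, hs.2.2, hs.2.1⟩
    refine ⟨cross_eq hTree hPD hCI h34 hs, ?_, ?_⟩
    · have hne := cross_ne hTree hPD hCI h34 hs
      rw [sym hPD i₂ i₁, sym hPD i₃ i₁]
      exact hne
    · have hne := cross_ne hTree hPD hCI (Ne.symm h34) hs'
      rw [sym hPD i₄ i₃] at hne
      rw [sym hPD i₂ i₁, sym hPD i₄ i₁]
      exact hne
  · rintro ⟨b1, b2, b3⟩
    rcases quartet hTree i₁ i₂ i₃ i₄ with h | ⟨k, hs⟩ | ⟨k, hs⟩ | ⟨m, hm12, hm13, hm14, hm23, hm24, hm34⟩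
    · exact h
    · exfalso
      have he := cross_eq hTree hPD hCI h24 hs
      have hn := cross_ne hTree hPD hCI h24 hs
      exact hn (by linear_combination b1 - he - Sig i₁ i₄ * sym hPD i₃ i₂)
    · exfalso
      have he := cross_eq hTree hPD hCI h23 hs
      have hn := cross_ne hTree hPD hCI h23 hs
      exact hn (by linear_combination -b1 - he - Sig i₁ i₃ * sym hPD i₄ i₂)
    · exfalso
      apply b2
      have hmm := (diag_pos_s15 hPD m).ne'
      have f12 := factor_mem hTree hPD hCI hm12
      have f34 := factor_mem hTree hPD hCI hm34
      have f13 := factor_mem hTree hPD hCI hm13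
      have f24 := factor_mem hTree hPD hCI hm24
      have e1 : Sig i₁ i₂ * Sig i₃ i₄ * (Sig m m * Sig m m) =
          Sig i₁ m * Sig m i₂ * (Sig i₃ m * Sig m i₄) := by
        linear_combination (Sig i₃ i₄ * Sig m m) * f12 + (Sig i₁ m * Sig m i₂) * f34
      have e2 : Sig i₁ i₃ * Sig i₂ i₄ * (Sig m m * Sig m m) =
          Sig i₁ m * Sig m i₃ * (Sig i₂ m * Sig m i₄) := by
        linear_combination (Sig i₂ i₄ * Sig m m) * f13 + (Sig i₁ m * Sig m i₃) * f24
      apply mul_right_cancel₀ (mul_ne_zero hmm hmm)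
      linear_combination (Sig i₃ i₄ * Sig m m * Sig m m) * (sym hPD i₂ i₁)
        - (Sig i₂ i₄ * Sig m m * Sig m m) * (sym hPD i₃ i₁) + e1 - e2
        + (Sig i₁ m * Sig m i₄ * Sig i₃ m) * (sym hPD m i₂)
        + (Sig i₁ m * Sig m i₄ * Sig i₂ m) * (sym hPD i₃ m)
end

section
/- Let Σ be an n×n positive definite real matrix with Ω = Σ⁻¹, let a ≠ b be indices such that a is a leaf attached to b in Ω, let c > 0, and set Σ^q = Σ − (1/Ω_{aa})·E_{aa} + c·E_{bb}. Then for all distinct indices i, j with i, j ∉ {a, b}: if Σ_{ij}·Σ_{bb} = Σ_{ib}·Σ_{jb}, then Σ^q_{ij}·Σ^q_{aa} = Σ^q_{ia}·Σ^q_{ja}. -/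
open Matrix

theorem stmt_17 {n : ℕ}
    (Sig : Matrix (Fin n) (Fin n) ℝ) (hPD : Sig.PosDef)
    (a b : Fin n) (hab : a ≠ b) (hleaf : IsLeafAttached Sig⁻¹ a b)
    (c : ℝ) (hc : 0 < c)
    (Sq : Matrix (Fin n) (Fin n) ℝ)
    (hSq : Sq = Sig - Matrix.single a a (1 / Sig⁻¹ a a) + Matrix.single b b c) :
    ∀ i j : Fin n, i ≠ j → i ≠ a → i ≠ b → j ≠ a → j ≠ b →
      Sig i j * Sig b b = Sig i b * Sig j b →
      Sq i j * Sq a a = Sq i a * Sq j a := by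
  intro i j hij hia hib hja hjb hyp
  have hOm : (Sig⁻¹).PosDef := hPD.inv
  have hd : 0 < Sig⁻¹ a a := by
    have := hOm.dotProduct_mulVec_pos (x := Pi.single a 1) (by
      intro h
      have := congrFun h a
      simp [Pi.single_eq_same] at this)
    simpa using this
  have hd0 : Sig⁻¹ a a ≠ 0 := hd.ne'
  have hmul : Sig * Sig⁻¹ = 1 := Matrix.mul_nonsing_inv _ hPD.det_pos.ne'.isUnit
  have key : ∀ k : Fin n, (1 : Matrix (Fin n) (Fin n) ℝ) k a
      = Sig k a * Sig⁻¹ a a + Sig k b * Sig⁻¹ b a := by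
    intro k
    rw [← hmul, Matrix.mul_apply]
    rw [← Finset.sum_subset (Finset.subset_univ ({a, b} : Finset (Fin n)))]
    · rw [Finset.sum_pair hab]
    · intro x _ hx
      simp only [Finset.mem_insert, Finset.mem_singleton, not_or] at hx
      rw [hleaf.1 x hx.1 hx.2, mul_zero]
  have h1 := key i; have h2 := key j; have h3 := key b; have h4 := key a
  rw [Matrix.one_apply_ne hia] at h1
  rw [Matrix.one_apply_ne hja] at h2
  rw [Matrix.one_apply_ne hab.symm] at h3
  rw [Matrix.one_apply_eq] at h4
  have hsym : Sig a b = Sig b a := by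
    have := hPD.isHermitian.apply b a
    simpa using this
  have eij : Sq i j = Sig i j := by
    rw [hSq, Matrix.add_apply, Matrix.sub_apply,
      Matrix.single_apply_of_ne a a _ i j (fun h => hia h.1.symm),
      Matrix.single_apply_of_ne b b _ i j (fun h => hib h.1.symm)]
    ring
  have eia : Sq i a = Sig i a := by
    rw [hSq, Matrix.add_apply, Matrix.sub_apply,
      Matrix.single_apply_of_ne a a _ i a (fun h => hia h.1.symm),
      Matrix.single_apply_of_ne b b _ i a (fun h => hab h.2.symm)]
    ring
  have eja : Sq j a = Sig j a := by
    rw [hSq, Matrix.add_apply, Matrix.sub_apply,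
      Matrix.single_apply_of_ne a a _ j a (fun h => hja h.1.symm),
      Matrix.single_apply_of_ne b b _ j a (fun h => hab h.2.symm)]
    ring
  have eaa : Sq a a = Sig a a - 1 / Sig⁻¹ a a := by
    rw [hSq, Matrix.add_apply, Matrix.sub_apply, Matrix.single_apply_same,
      Matrix.single_apply_of_ne b b _ a a (fun h => hab h.1.symm)]
    ring
  set d := Sig⁻¹ a a with hdd
  set e := Sig⁻¹ b a with hee
  have core : d * (Sig i j * (Sig a a * d - 1)) = d * (Sig i a * Sig j a * d) := by
    linear_combination (-(Sig i j * d)) * h4 + (-(Sig i j * e * d)) * hsym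
      + (Sig i j * e) * h3 + e^2 * hyp + (Sig j a * d) * h1 + (-(Sig i b * e)) * h2
  have step : Sig i j * (Sig a a * d - 1) = Sig i a * Sig j a * d :=
    mul_left_cancel₀ hd0 core
  rw [eij, eia, eja, eaa]
  have expand : Sig i j * (Sig a a - 1 / d) = Sig i j * (Sig a a * d - 1) / d := by
    field_simp
  rw [expand, step]
  field_simp
end

section
/- Let T be a tree on a finite vertex set V and let B ⊆ V be such that both B and V ∖ B are nonempty and each induces a connected subgraph of T. Let i_root ∈ B be a vertex adjacent in T to some vertex of V ∖ B, let i_outside ∈ V ∖ B, and let i_close ∈ B be either i_root itself or a leaf of T adjacent to i_root. Let i₁, i₂ be two distinct vertices of B ∖ {i_root, i_close}. Then the four distinct vertices {i_outside, i_close, i₁, i₂} form a non-star shape in T if and only if i₁ and i₂ lie in the same connected component of the subgraph of T induced on B ∖ {i_root}; moreover, in that case there exists a vertex k of T such that i₁ and i₂ lie in a common connected component of T with k deleted that contains neither i_outside nor i_close. -/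
open Matrix

namespace StarAux

open SimpleGraph Walk

variable {V : Type*} [DecidableEq V] {T : SimpleGraph V}

lemma walk_of_induce_reach {s : Set V} {x y : V} {hx : x ∈ s} {hy : y ∈ s}
    (h : (T.induce s).Reachable ⟨x, hx⟩ ⟨y, hy⟩) :
    ∃ w : T.Walk x y, ∀ v ∈ w.support, v ∈ s := by
  obtain ⟨w⟩ := h
  refine ⟨w.map (SimpleGraph.Embedding.induce s).toHom, fun v hv => ?_⟩
  replace hv : v ∈ (w.map (SimpleGraph.Embedding.induce s).toHom).support := hv
  rw [SimpleGraph.Walk.support_map] at hv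
  obtain ⟨⟨u, hu⟩, -, rfl⟩ := List.mem_map.1 hv
  exact hu

lemma induce_reach_of_walk {s : Set V} : ∀ {x y : V} (w : T.Walk x y),
    (∀ v ∈ w.support, v ∈ s) → ∀ (hx : x ∈ s) (hy : y ∈ s),
    (T.induce s).Reachable ⟨x, hx⟩ ⟨y, hy⟩ := by
  intro x y w
  induction w with
  | nil => intro _ hx hy; exact Reachable.refl _
  | @cons a b c h p ih =>
    intro hsup hx hy
    have hb : b ∈ s := hsup b (by simp)
    have hadj : (T.induce s).Adj ⟨a, hx⟩ ⟨b, hb⟩ := h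
    exact hadj.reachable.trans (ih (fun v hv => hsup v (by rw [Walk.support_cons]; exact List.mem_cons_of_mem _ hv)) hb hy)

variable (hT : T.IsTree)

noncomputable def pth (x y : V) : T.Walk x y := (hT.existsUnique_path x y).choose

lemma pth_isPath (x y : V) : (pth hT x y).IsPath := (hT.existsUnique_path x y).choose_spec.1

lemma pth_unique {x y : V} {w : T.Walk x y} (hw : w.IsPath) : w = pth hT x y :=
  (hT.existsUnique_path x y).choose_spec.2 w hw

lemma pth_support_subset {x y : V} (w : T.Walk x y) :
    (pth hT x y).support ⊆ w.support := by
  rw [← pth_unique hT w.toPath.2]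
  exact Walk.support_toPath_subset w

lemma sameComp_iff {k x y : V} :
    SameComp T k x y ↔ x ≠ k ∧ y ≠ k ∧ k ∉ (pth hT x y).support := by
  constructor
  · rintro ⟨hx, hy, hr⟩
    obtain ⟨w, hw⟩ := walk_of_induce_reach hr
    exact ⟨hx, hy, fun hk => hw k (pth_support_subset hT w hk) rfl⟩
  · rintro ⟨hx, hy, hk⟩
    exact ⟨hx, hy, induce_reach_of_walk (pth hT x y)
      (fun v hv => show v ≠ k from fun hvk => hk (hvk ▸ hv)) hx hy⟩

lemma mem_of_not_sameComp {k x y : V} (hx : x ≠ k) (h : ¬ SameComp T k x y) :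
    k ∈ (pth hT x y).support := by
  by_cases hy : y = k
  · subst hy; exact Walk.end_mem_support _
  · rw [sameComp_iff hT] at h
    push_neg at h
    exact h hx hy

lemma pth_mem_symm {k x y : V} (h : k ∈ (pth hT x y).support) :
    k ∈ (pth hT y x).support := by
  rw [← pth_unique hT (pth_isPath hT x y).reverse, Walk.support_reverse]
  exact List.mem_reverse.2 h

lemma pth_adj {a b : V} (h : T.Adj a b) : pth hT a b = Walk.cons h Walk.nil :=
  (pth_unique hT (by simp [h.ne])).symm

lemma pth_refl (x : V) : pth hT x x = Walk.nil :=
  (pth_unique hT (Walk.IsPath.nil)).symm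

lemma pth_subset_left {x y z : V} (h : y ∈ (pth hT x z).support) :
    (pth hT x y).support ⊆ (pth hT x z).support := by
  rw [← pth_unique hT ((pth_isPath hT x z).takeUntil h)]
  exact Walk.support_takeUntil_subset _ h

lemma pth_mem_decompose {k x z : V} (y : V) (h : k ∈ (pth hT x z).support) :
    k ∈ (pth hT x y).support ∨ k ∈ (pth hT y z).support := by
  have h2 := pth_support_subset hT ((pth hT x y).append (pth hT y z)) h
  rwa [Walk.mem_support_append_iff] at h2

lemma pth_split_inter {x y z k : V} (h : y ∈ (pth hT x z).support)
    (h1 : k ∈ (pth hT x y).support) (h2 : k ∈ (pth hT y z).support) : k = y := by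
  by_contra hk
  have e1 : (pth hT x z).takeUntil y h = pth hT x y :=
    pth_unique hT ((pth_isPath hT x z).takeUntil h)
  have e2 : (pth hT x z).dropUntil y h = pth hT y z :=
    pth_unique hT ((pth_isPath hT x z).dropUntil h)
  have hnd := (pth_isPath hT x z).support_nodup
  rw [← Walk.take_spec (pth hT x z) h, Walk.support_append] at hnd
  have hd := (List.nodup_append.1 hnd).2.2
  refine hd (a := k) (by rw [e1]; exact h1) k ?_ rfl
  rw [e2]
  have hc := Walk.support_eq_cons (pth hT y z)
  rw [hc] at h2
  rcases List.mem_cons.1 h2 with h2 | h2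
  · exact absurd h2 hk
  · exact h2

lemma leaf_walk' {a r : V} (hl : IsLeaf T a) (har : T.Adj a r) {z : V}
    (w : T.Walk a z) (hz : z ≠ a) : r ∈ w.support := by
  cases w with
  | nil => exact absurd rfl hz
  | @cons _ b _ h p =>
    obtain ⟨c, -, hc⟩ := hl
    have hbr : b = r := by rw [hc b h, ← hc r har]
    rw [Walk.support_cons]
    exact List.mem_cons_of_mem _ (hbr ▸ p.start_mem_support)

lemma leaf_mem_pth {a r : V} (hl : IsLeaf T a) (har : T.Adj a r) {z : V} (hz : z ≠ a) :
    r ∈ (pth hT a z).support :=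
  leaf_walk' hl har (pth hT a z) hz

lemma leaf_mem_pth' {a r : V} (hl : IsLeaf T a) (har : T.Adj a r) {z : V} (hz : z ≠ a) :
    r ∈ (pth hT z a).support :=
  pth_mem_symm hT (leaf_mem_pth hT hl har hz)

lemma leaf_not_interior {a r x y : V} (hl : IsLeaf T a) (har : T.Adj a r) (hx : x ≠ a)
    (hy : y ≠ a) (hmem : a ∈ (pth hT x y).support) : False := by
  have h1 : r ∈ (pth hT x a).support := leaf_mem_pth' hT hl har hx
  have h2 : r ∈ (pth hT a y).support := leaf_mem_pth hT hl har hy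
  exact har.ne' (pth_split_inter hT hmem h1 h2)


lemma cross_edge {B : Set V} {iroot : V} : ∀ {x y : V} (w : T.Walk x y),
    x ∈ B → y ∈ Bᶜ → iroot ∉ w.support →
    ∃ a b, a ∈ B ∧ b ∈ Bᶜ ∧ T.Adj a b ∧ a ≠ iroot := by
  intro x y w
  induction w with
  | nil => intro hx hy _; exact absurd hx hy
  | @cons u c _ h p ih =>
    intro hx hy hr
    by_cases hc : c ∈ B
    · exact ih hc hy (fun hm => hr (by rw [Walk.support_cons]; exact List.mem_cons_of_mem _ hm))
    · exact ⟨u, c, hx, hc, h, fun he => hr (he ▸ Walk.start_mem_support _)⟩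

include hT in
lemma cross_aux {B : Set V} (hBconn : (T.induce B).Connected)
    (hBcconn : (T.induce Bᶜ).Connected)
    {iroot : V} (hrootB : iroot ∈ B) {v₀ : V} (hv₀ : v₀ ∈ Bᶜ) (hadj : T.Adj iroot v₀)
    {a b : V} (ha : a ∈ B) (hb : b ∈ Bᶜ) (hab : T.Adj a b) (har : a ≠ iroot) : False := by
  obtain ⟨w₁, hw₁⟩ := walk_of_induce_reach (hBconn.preconnected ⟨a, ha⟩ ⟨iroot, hrootB⟩)
  obtain ⟨w₂, hw₂⟩ := walk_of_induce_reach (hBcconn.preconnected ⟨v₀, hv₀⟩ ⟨b, hb⟩)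
  set W : T.Walk a b := w₁.append (Walk.cons hadj w₂) with hW
  have hedge : s(a, b) ∈ (pth hT a b).edges := by
    rw [pth_adj hT hab]; simp
  have hmem : s(a, b) ∈ W.edges := by
    have h1 : (W.toPath : T.Walk a b) = pth hT a b := pth_unique hT W.toPath.2
    exact Walk.edges_toPath_subset W (by rw [h1]; exact hedge)
  rw [hW, Walk.edges_append, Walk.edges_cons] at hmem
  rcases List.mem_append.1 hmem with hm | hm
  · have := Walk.snd_mem_support_of_mem_edges w₁ hm
    exact hb (hw₁ b this)
  · rcases List.mem_cons.1 hm with hm | hm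
    · rw [Sym2.eq_iff] at hm
      rcases hm with ⟨h1, -⟩ | ⟨h1, -⟩
      · exact har h1
      · exact (h1 ▸ hv₀) ha
    · have := Walk.fst_mem_support_of_mem_edges w₂ hm
      exact (hw₂ a this) ha

include hT in
lemma cross_mem {B : Set V} (hBconn : (T.induce B).Connected)
    (hBcconn : (T.induce Bᶜ).Connected)
    {iroot : V} (hrootB : iroot ∈ B) {v₀ : V} (hv₀ : v₀ ∈ Bᶜ) (hadj : T.Adj iroot v₀)
    {x y : V} (hx : x ∈ B) (hy : y ∈ Bᶜ) (w : T.Walk x y) : iroot ∈ w.support := by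
  by_contra hr
  obtain ⟨a, b, ha, hb, hab, har⟩ := cross_edge w hx hy hr
  exact cross_aux hT hBconn hBcconn hrootB hv₀ hadj ha hb hab har

lemma crossQ {B : Set V} (hBconn : (T.induce B).Connected)
    (hBcconn : (T.induce Bᶜ).Connected)
    {iroot : V} (hrootB : iroot ∈ B) {v₀ : V} (hv₀ : v₀ ∈ Bᶜ) (hadj : T.Adj iroot v₀)
    {x y : V} (hx : x ∈ B) (hy : y ∈ Bᶜ) : iroot ∈ (pth hT x y).support :=
  cross_mem hT hBconn hBcconn hrootB hv₀ hadj hx hy _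

lemma crossQ' {B : Set V} (hBconn : (T.induce B).Connected)
    (hBcconn : (T.induce Bᶜ).Connected)
    {iroot : V} (hrootB : iroot ∈ B) {v₀ : V} (hv₀ : v₀ ∈ Bᶜ) (hadj : T.Adj iroot v₀)
    {x y : V} (hx : x ∈ Bᶜ) (hy : y ∈ B) : iroot ∈ (pth hT x y).support :=
  pth_mem_symm hT (crossQ hT hBconn hBcconn hrootB hv₀ hadj hy hx)

lemma QrootB {B : Set V} (hBconn : (T.induce B).Connected)
    {iroot : V} (hrootB : iroot ∈ B) {x : V} (hx : x ∈ B) :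
    ∀ v ∈ (pth hT iroot x).support, v ∈ B := by
  obtain ⟨w, hw⟩ := walk_of_induce_reach (hBconn.preconnected ⟨iroot, hrootB⟩ ⟨x, hx⟩)
  exact fun v hv => hw v (pth_support_subset hT w hv)

lemma QrootBc {B : Set V} (hBcconn : (T.induce Bᶜ).Connected)
    {iroot : V} {v₀ : V} (hv₀ : v₀ ∈ Bᶜ) (hadj : T.Adj iroot v₀)
    {x : V} (hx : x ∈ Bᶜ) :
    ∀ v ∈ (pth hT iroot x).support, v = iroot ∨ v ∈ Bᶜ := by
  obtain ⟨w, hw⟩ := walk_of_induce_reach (hBcconn.preconnected ⟨v₀, hv₀⟩ ⟨x, hx⟩)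
  intro v hv
  have := pth_support_subset hT (Walk.cons hadj w) hv
  rw [Walk.support_cons] at this
  rcases List.mem_cons.1 this with h | h
  · exact Or.inl h
  · exact Or.inr (hw v h)

end StarAux


theorem stmt_18 {V : Type*} [Fintype V] [DecidableEq V]
    (T : SimpleGraph V) (hTree : T.IsTree)
    (B : Set V) (hB : B.Nonempty) (hBc : Bᶜ.Nonempty)
    (hBconn : (T.induce B).Connected) (hBcconn : (T.induce Bᶜ).Connected)
    (iroot : V) (hrootB : iroot ∈ B) (hrootadj : ∃ v ∈ Bᶜ, T.Adj iroot v)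
    (iout : V) (houtB : iout ∈ Bᶜ)
    (iclose : V) (hcloseB : iclose ∈ B)
    (hclose : iclose = iroot ∨ (IsLeaf T iclose ∧ T.Adj iclose iroot))
    (i₁ i₂ : V) (h12 : i₁ ≠ i₂)
    (hi₁ : i₁ ∈ B ∧ i₁ ≠ iroot ∧ i₁ ≠ iclose)
    (hi₂ : i₂ ∈ B ∧ i₂ ≠ iroot ∧ i₂ ≠ iclose) :
    (NonStar T iout iclose i₁ i₂ ↔
      ∃ (h₁ : i₁ ∈ B \ {iroot}) (h₂ : i₂ ∈ B \ {iroot}),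
        (T.induce (B \ {iroot})).Reachable ⟨i₁, h₁⟩ ⟨i₂, h₂⟩) ∧
    (NonStar T iout iclose i₁ i₂ →
      ∃ k : V, SameComp T k i₁ i₂ ∧ ¬ SameComp T k i₁ iout ∧ ¬ SameComp T k i₁ iclose) := by
  classical
  open StarAux SimpleGraph Walk in
  obtain ⟨v₀, hv₀, hadjroot⟩ := hrootadj
  obtain ⟨hi₁B, hi₁r, hi₁c⟩ := hi₁
  obtain ⟨hi₂B, hi₂r, hi₂c⟩ := hi₂
  have houtnB : iout ∉ B := houtB
  have houtc : iout ≠ iclose := fun h => houtnB (h ▸ hcloseB)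
  -- iroot on any path ending at iclose
  have hrc : ∀ z : V, z ≠ iclose → iroot ∈ (pth hTree z iclose).support := by
    intro z hz
    rcases hclose with h | ⟨hl, hadj⟩
    · rw [h]; exact Walk.end_mem_support _
    · exact leaf_mem_pth' hTree hl hadj hz
  have hrc' : ∀ z : V, z ≠ iclose → iroot ∈ (pth hTree iclose z).support :=
    fun z hz => pth_mem_symm hTree (hrc z hz)
  -- the path from iroot to iclose has support ⊆ {iroot, iclose}
  have hQric : ∀ k : V, k ∈ (pth hTree iroot iclose).support → k = iroot ∨ k = iclose := by
    intro k hk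
    rcases hclose with h | ⟨hl, hadj⟩
    · subst h; rw [pth_refl hTree] at hk; simp at hk; exact Or.inl hk
    · rw [pth_adj hTree hadj.symm] at hk
      simpa using hk
  -- iclose interior forces iclose = iroot
  have hclosemem : ∀ x y : V, x ≠ iclose → y ≠ iclose →
      iclose ∈ (pth hTree x y).support → iclose = iroot := by
    intro x y hx hy hmem
    rcases hclose with h | ⟨hl, hadj⟩
    · exact h
    · exact (leaf_not_interior hTree hl hadj hx hy hmem).elim
  have hcr1 : iroot ∈ (pth hTree iout i₁).support :=
    crossQ' hTree hBconn hBcconn hrootB hv₀ hadjroot houtB hi₁B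
  have hcr2 : iroot ∈ (pth hTree iout i₂).support :=
    crossQ' hTree hBconn hBcconn hrootB hv₀ hadjroot houtB hi₂B
  -- forward key: NonStar implies iroot is not on the i₁–i₂ path
  have key : NonStar T iout iclose i₁ i₂ → iroot ∉ (pth hTree i₁ i₂).support := by
    rintro ⟨k, hc | hc | hc | hc | hc | hc⟩
    · -- pair (iout, iclose)
      obtain ⟨hs, hn1, hn2⟩ := hc
      rw [sameComp_iff hTree] at hs
      obtain ⟨houtk, hclosek, hknQ⟩ := hs
      have k1 : k ∈ (pth hTree iout i₁).support := mem_of_not_sameComp hTree houtk hn1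
      have k2 : k ∈ (pth hTree iout i₂).support := mem_of_not_sameComp hTree houtk hn2
      have hric : iroot ∈ (pth hTree iout iclose).support := hrc iout houtc
      have knr : k ≠ iroot := fun h => hknQ (h ▸ hric)
      have hnir : k ∉ (pth hTree iout iroot).support :=
        fun hk => hknQ (pth_subset_left hTree hric hk)
      have kr1 : k ∈ (pth hTree iroot i₁).support :=
        (pth_mem_decompose hTree iroot k1).resolve_left hnir
      have kr2 : k ∈ (pth hTree iroot i₂).support :=
        (pth_mem_decompose hTree iroot k2).resolve_left hnir
      intro hmem
      exact knr (pth_split_inter hTree hmem (pth_mem_symm hTree kr1) kr2)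
    · -- pair (iout, i₁) : impossible
      obtain ⟨hs, hn1, hn2⟩ := hc
      rw [sameComp_iff hTree] at hs
      obtain ⟨houtk, h1k, hknQ⟩ := hs
      have kc : k ∈ (pth hTree iout iclose).support := mem_of_not_sameComp hTree houtk hn1
      have k2 : k ∈ (pth hTree iout i₂).support := mem_of_not_sameComp hTree houtk hn2
      exfalso
      have hnir : k ∉ (pth hTree iout iroot).support :=
        fun hk => hknQ (pth_subset_left hTree hcr1 hk)
      have hkc : k ∈ (pth hTree iroot iclose).support :=
        (pth_mem_decompose hTree iroot kc).resolve_left hnir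
      rcases hQric k hkc with h | h
      · exact hknQ (by rw [h]; exact hcr1)
      · have heq : iclose = iroot := hclosemem iout i₂ houtc hi₂c (by rw [← h]; exact k2)
        exact hknQ (by rw [h, heq]; exact hcr1)
    · -- pair (iout, i₂) : impossible
      obtain ⟨hs, hn1, hn2⟩ := hc
      rw [sameComp_iff hTree] at hs
      obtain ⟨houtk, h2k, hknQ⟩ := hs
      have kc : k ∈ (pth hTree iout iclose).support := mem_of_not_sameComp hTree houtk hn1
      have k1 : k ∈ (pth hTree iout i₁).support := mem_of_not_sameComp hTree houtk hn2
      exfalso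
      have hnir : k ∉ (pth hTree iout iroot).support :=
        fun hk => hknQ (pth_subset_left hTree hcr2 hk)
      have hkc : k ∈ (pth hTree iroot iclose).support :=
        (pth_mem_decompose hTree iroot kc).resolve_left hnir
      rcases hQric k hkc with h | h
      · exact hknQ (by rw [h]; exact hcr2)
      · have heq : iclose = iroot := hclosemem iout i₁ houtc hi₁c (by rw [← h]; exact k1)
        exact hknQ (by rw [h, heq]; exact hcr2)
    · -- pair (iclose, i₁) : impossible
      obtain ⟨hs, hn1, hn2⟩ := hc
      rw [sameComp_iff hTree] at hs
      obtain ⟨hclosek, h1k, hknQ⟩ := hs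
      have kc : k ∈ (pth hTree iclose iout).support := mem_of_not_sameComp hTree hclosek hn1
      have k2 : k ∈ (pth hTree iclose i₂).support := mem_of_not_sameComp hTree hclosek hn2
      exfalso
      have hric1 : iroot ∈ (pth hTree iclose i₁).support := hrc' i₁ hi₁c
      have knr : k ≠ iroot := fun h => hknQ (h ▸ hric1)
      have hnir : k ∉ (pth hTree iclose iroot).support := by
        intro hk
        rcases hQric k (pth_mem_symm hTree hk) with h | h
        · exact knr h
        · exact hclosek h.symm
      have kio : k ∈ (pth hTree iroot iout).support :=
        (pth_mem_decompose hTree iroot kc).resolve_left hnir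
      have ki2 : k ∈ (pth hTree iroot i₂).support :=
        (pth_mem_decompose hTree iroot k2).resolve_left hnir
      have hkBc : k ∈ Bᶜ :=
        ((QrootBc hTree hBcconn hv₀ hadjroot houtB) k kio).resolve_left knr
      exact hkBc ((QrootB hTree hBconn hrootB hi₂B) k ki2)
    · -- pair (iclose, i₂) : impossible
      obtain ⟨hs, hn1, hn2⟩ := hc
      rw [sameComp_iff hTree] at hs
      obtain ⟨hclosek, h2k, hknQ⟩ := hs
      have kc : k ∈ (pth hTree iclose iout).support := mem_of_not_sameComp hTree hclosek hn1
      have k1 : k ∈ (pth hTree iclose i₁).support := mem_of_not_sameComp hTree hclosek hn2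
      exfalso
      have hric2 : iroot ∈ (pth hTree iclose i₂).support := hrc' i₂ hi₂c
      have knr : k ≠ iroot := fun h => hknQ (h ▸ hric2)
      have hnir : k ∉ (pth hTree iclose iroot).support := by
        intro hk
        rcases hQric k (pth_mem_symm hTree hk) with h | h
        · exact knr h
        · exact hclosek h.symm
      have kio : k ∈ (pth hTree iroot iout).support :=
        (pth_mem_decompose hTree iroot kc).resolve_left hnir
      have ki1 : k ∈ (pth hTree iroot i₁).support :=
        (pth_mem_decompose hTree iroot k1).resolve_left hnir
      have hkBc : k ∈ Bᶜ :=
        ((QrootBc hTree hBcconn hv₀ hadjroot houtB) k kio).resolve_left knr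
      exact hkBc ((QrootB hTree hBconn hrootB hi₁B) k ki1)
    · -- pair (i₁, i₂)
      obtain ⟨hs, hn1, hn2⟩ := hc
      rw [sameComp_iff hTree] at hs
      obtain ⟨h1k, h2k, hknQ⟩ := hs
      have ko : k ∈ (pth hTree i₁ iout).support := mem_of_not_sameComp hTree h1k hn1
      have kc : k ∈ (pth hTree i₁ iclose).support := mem_of_not_sameComp hTree h1k hn2
      by_cases hkr : k = iroot
      · exact hkr ▸ hknQ
      · intro hmem
        rcases pth_mem_decompose hTree iroot kc with hk | hk
        · exact hknQ (pth_subset_left hTree hmem hk)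
        · rcases hQric k hk with h | h
          · exact hkr h
          · exact hkr (h.trans (hclosemem i₁ iout hi₁c houtc (by rw [← h]; exact ko)))
  -- support of the i₁–i₂ path lies in B \ {iroot} once it avoids iroot
  have hBsub : iroot ∉ (pth hTree i₁ i₂).support →
      ∀ v ∈ (pth hTree i₁ i₂).support, v ∈ B \ {iroot} := by
    intro hni v hv
    refine ⟨?_, fun hveq => hni (Set.mem_singleton_iff.1 hveq ▸ hv)⟩
    by_contra hvB
    have hmem : iroot ∈ (pth hTree i₁ v).support :=
      crossQ hTree hBconn hBcconn hrootB hv₀ hadjroot hi₁B hvB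
    exact hni (pth_subset_left hTree hv hmem)
  have h₁' : i₁ ∈ B \ {iroot} := ⟨hi₁B, fun h => hi₁r (Set.mem_singleton_iff.1 h)⟩
  have h₂' : i₂ ∈ B \ {iroot} := ⟨hi₂B, fun h => hi₂r (Set.mem_singleton_iff.1 h)⟩
  have fwd : NonStar T iout iclose i₁ i₂ →
      ∃ (h₁ : i₁ ∈ B \ {iroot}) (h₂ : i₂ ∈ B \ {iroot}),
        (T.induce (B \ {iroot})).Reachable ⟨i₁, h₁⟩ ⟨i₂, h₂⟩ := by
    intro hns
    exact ⟨h₁', h₂', induce_reach_of_walk (pth hTree i₁ i₂) (hBsub (key hns)) h₁' h₂'⟩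
  have hps : (∃ (h₁ : i₁ ∈ B \ {iroot}) (h₂ : i₂ ∈ B \ {iroot}),
        (T.induce (B \ {iroot})).Reachable ⟨i₁, h₁⟩ ⟨i₂, h₂⟩) →
      PairSplit T iroot i₁ i₂ iout iclose := by
    rintro ⟨hh₁, hh₂, hr⟩
    obtain ⟨w, hw⟩ := walk_of_induce_reach hr
    refine ⟨⟨hi₁r, hi₂r, induce_reach_of_walk w
      (fun v hv => show v ≠ iroot from fun he => (hw v hv).2 (Set.mem_singleton_iff.2 he))
      hi₁r hi₂r⟩, ?_, ?_⟩
    · rintro ⟨ha', hb', hr'⟩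
      obtain ⟨w', hw'⟩ := walk_of_induce_reach hr'
      have hmem := cross_mem hTree hBconn hBcconn hrootB hv₀ hadjroot hi₁B houtB w'
      exact hw' iroot hmem rfl
    · rintro ⟨ha', hcr, hr'⟩
      rcases hclose with h | ⟨hl, hadj⟩
      · exact hcr h
      · obtain ⟨w', hw'⟩ := walk_of_induce_reach hr'
        have hmem : iroot ∈ w'.support := by
          have h2 := leaf_walk' hl hadj w'.reverse hi₁c
          rw [Walk.support_reverse] at h2
          exact List.mem_reverse.1 h2
        exact hw' iroot hmem rfl
  refine ⟨⟨fwd, fun hrhs => ⟨iroot, Or.inr (Or.inr (Or.inr (Or.inr (Or.inr (hps hrhs)))))⟩⟩, ?_⟩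
  intro hns
  exact ⟨iroot, hps (fwd hns)⟩
end
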